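/- arXiv:math/0511147 — 8 statements merged into one kernel-verified Lean document; each statement's English description precedes it below -/
import Mathlib

section
/- A real orthogonal 2×2 matrix R (i.e. R ∈ O(2,ℝ)) is a coincidence isometry of the square lattice ℤ² — meaning that the subgroup ℤ² ∩ R(ℤ²) has finite index in ℤ² — if and only if all four entries of R are rational numbers. -/
/-!
For orthogonal `R` we have `R(ℤ²) = {v | Rᵀ v ∈ ℤ²}`, so `ℤ² ∩ R(ℤ²)` consists of the integer
vectors `v` with `Rᵀ v` integral. If this subgroup has finite index `n`, it contains `n • eⱼ`,
so `n • Rᵀ` is an integer matrix and `R` is rational. Conversely, if `b • Rᵀ` is integral for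
some integer `b ≠ 0`, the subgroup contains `b • ℤ²`; the quotient of `ℤ²` by it is then a
finitely generated torsion group, hence finite.
-/

/-- The square lattice `ℤ²`, viewed as the additive subgroup of `ℝ²` generated by the
standard basis vectors. -/
noncomputable def squareLattice : AddSubgroup (Fin 2 → ℝ) :=
  AddSubgroup.closure (Set.range fun i : Fin 2 => (Pi.single i 1 : Fin 2 → ℝ))

open Matrix

theorem AddSubgroup.relIndex_ne_zero_of_zsmul_mem {G : Type*} [AddCommGroup G]
    {H K : AddSubgroup G} [AddGroup.FG K] {n : ℤ} (hn : n ≠ 0) (h : ∀ x ∈ K, n • x ∈ H) :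
    H.relIndex K ≠ 0 := by
  have htorsion : IsAddTorsion (K ⧸ H.addSubgroupOf K) := by
    rintro ⟨x⟩
    exact isOfFinAddOrder_iff_zsmul_eq_zero.mpr
      ⟨n, hn, (QuotientAddGroup.eq_zero_iff _).mpr (h x x.2)⟩
  have := AddCommGroup.finite_of_fg_isAddTorsion _ htorsion
  exact index_ne_zero_of_finite

theorem exists_int_ne_zero_mul_eq_intCast {α K : Type*} [Finite α] [Field K] [CharZero K]
    {x : α → K} (hx : ∀ a, ∃ q : ℚ, x a = q) : ∃ b : ℤ, b ≠ 0 ∧ ∀ a, ∃ m : ℤ, b * x a = m := by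
  choose q hq using hx
  obtain ⟨⟨b, hb⟩, hbq⟩ := IsLocalization.exist_integer_multiples_of_finite (nonZeroDivisors ℤ) q
  refine ⟨b, nonZeroDivisors.ne_zero hb, fun a => ?_⟩
  obtain ⟨m, hm⟩ := hbq a
  rw [algebraMap_int_eq, eq_intCast, zsmul_eq_mul] at hm
  exact ⟨m, by rw [hq]; exact_mod_cast hm.symm⟩

theorem Matrix.map_mulVecLin_eq_comap {ι R : Type*} [Fintype ι] [DecidableEq ι] [CommRing R]
    {M N : Matrix ι ι R} (h : M * N = 1) (L : AddSubgroup (ι → R)) :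
    L.map (mulVecLin M).toAddMonoidHom = L.comap (mulVecLin N).toAddMonoidHom := by
  ext v
  constructor
  · rintro ⟨w, hw, rfl⟩
    simpa [mulVec_mulVec, mul_eq_one_comm.mp h] using hw
  · intro hv
    exact ⟨N *ᵥ v, hv, by simp [mulVec_mulVec, h]⟩

section intLattice

variable (ι : Type*) [DecidableEq ι]

noncomputable def intLattice : AddSubgroup (ι → ℝ) :=
  AddSubgroup.closure (Set.range fun i : ι => (Pi.single i 1 : ι → ℝ))

variable {ι}

theorem single_one_mem_intLattice (i : ι) : Pi.single i 1 ∈ intLattice ι :=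
  AddSubgroup.subset_closure (Set.mem_range_self i)

variable [Fintype ι]

instance : AddGroup.FG (intLattice ι) := AddGroup.closure_finite_fg _

theorem mem_intLattice_iff {v : ι → ℝ} : v ∈ intLattice ι ↔ ∀ i, ∃ n : ℤ, v i = n := by
  constructor
  · intro hv
    induction hv using AddSubgroup.closure_induction with
    | mem x hx =>
      obtain ⟨i, rfl⟩ := hx
      intro j
      rcases eq_or_ne j i with rfl | hji
      · exact ⟨1, by simp⟩
      · exact ⟨0, by simp [hji]⟩
    | zero => exact fun i => ⟨0, by simp⟩
    | add x y _ _ hx hy =>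
      intro i
      obtain ⟨a, ha⟩ := hx i
      obtain ⟨b, hb⟩ := hy i
      exact ⟨a + b, by simp [ha, hb]⟩
    | neg x _ hx =>
      intro i
      obtain ⟨a, ha⟩ := hx i
      exact ⟨-a, by simp [ha]⟩
  · intro h
    choose n hn using h
    have hv : v = ∑ i, n i • (Pi.single i 1 : ι → ℝ) := by
      ext j
      simp [hn, Pi.single_apply]
    rw [hv]
    exact AddSubgroup.sum_mem _ fun i _ =>
      AddSubgroup.zsmul_mem _ (single_one_mem_intLattice i) _

theorem mulVec_mem_intLattice {A : Matrix ι ι ℝ} (hA : ∀ i j, ∃ n : ℤ, A i j = n)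
    {v : ι → ℝ} (hv : v ∈ intLattice ι) : A *ᵥ v ∈ intLattice ι := by
  choose a ha using hA
  choose z hz using mem_intLattice_iff.mp hv
  exact mem_intLattice_iff.mpr fun i => ⟨∑ j, a i j * z j, by simp [mulVec, dotProduct, ha, hz]⟩

theorem relIndex_intLattice_inf_map_ne_zero_iff {M N : Matrix ι ι ℝ} (h : M * N = 1) :
    (intLattice ι ⊓ (intLattice ι).map (mulVecLin M).toAddMonoidHom).relIndex (intLattice ι) ≠ 0 ↔
      ∀ i j, ∃ q : ℚ, N i j = q := by
  rw [map_mulVecLin_eq_comap h]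
  set H := intLattice ι ⊓ (intLattice ι).comap (mulVecLin N).toAddMonoidHom
  constructor
  · intro hn i j
    set n := H.relIndex (intLattice ι)
    have hmem : N *ᵥ (n • Pi.single j 1) ∈ intLattice ι :=
      (AddSubgroup.mem_inf.mp (H.nsmul_relIndex_mem (single_one_mem_intLattice j))).2
    obtain ⟨m, hm⟩ := mem_intLattice_iff.mp hmem i
    rw [mulVec_smul, mulVec_single_one, Pi.smul_apply, col_apply, nsmul_eq_mul] at hm
    refine ⟨m / n, ?_⟩
    rw [Rat.cast_div, Rat.cast_intCast, Rat.cast_natCast, ← hm]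
    field_simp
  · intro hN
    obtain ⟨b, hb, hbN⟩ :=
      exists_int_ne_zero_mul_eq_intCast (x := fun p : ι × ι => N p.1 p.2) fun p => hN p.1 p.2
    refine AddSubgroup.relIndex_ne_zero_of_zsmul_mem hb fun v hv => ⟨zsmul_mem hv b, ?_⟩
    show N *ᵥ (b • v) ∈ intLattice ι
    rw [mulVec_smul, ← smul_mulVec]
    exact mulVec_mem_intLattice (fun i j => by simpa using hbN (i, j)) hv

theorem squareLattice_eq_intLattice : squareLattice = intLattice (Fin 2) := rfl

end intLattice

/-- A real orthogonal 2×2 matrix `R` is a coincidence isometry of the square lattice `ℤ²`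
(i.e. `ℤ² ∩ R(ℤ²)` has finite index in `ℤ²`) if and only if all four entries of `R` are
rational numbers. -/
theorem squareLattice_coincidence_iff_rational
    (R : Matrix.orthogonalGroup (Fin 2) ℝ) :
    (AddSubgroup.relIndex
        (squareLattice ⊓
          AddSubgroup.map (Matrix.mulVecLin (R : Matrix (Fin 2) (Fin 2) ℝ)).toAddMonoidHom
            squareLattice)
        squareLattice ≠ 0) ↔
      ∀ i j : Fin 2, ∃ q : ℚ, (R : Matrix (Fin 2) (Fin 2) ℝ) i j = (q : ℝ) := by
  have hR : (R : Matrix (Fin 2) (Fin 2) ℝ) * (R : Matrix (Fin 2) (Fin 2) ℝ)ᵀ = 1 :=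
    (mem_orthogonalGroup_iff _ _).mp R.2
  rw [squareLattice_eq_intLattice]
  exact (relIndex_intLattice_inf_map_ne_zero_iff hR).trans
    ⟨fun h i j => h j i, fun h i j => h j i⟩
end

section
/- Let α and β be coprime Gaussian integers (i.e. the ideals they generate in ℤ[i] are comaximal) with equal norms norm(α) = norm(β) = m, and let z = α/β ∈ ℂ. Then the additive subgroup ℤ[i] ∩ z·ℤ[i] of ℂ equals α·ℤ[i] and has index m in ℤ[i]. -/
open GaussianInt

/-- The ring of Gaussian integers `ℤ[i]`, viewed as an additive subgroup of `ℂ`. -/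
noncomputable def gaussianIntegers : AddSubgroup ℂ :=
  (Subring.closure {Complex.I}).toAddSubgroup

/-- For a complex number `z`, the additive subgroup `z·ℤ[i]` of `ℂ`. -/
noncomputable def zMulGaussianIntegers (z : ℂ) : AddSubgroup ℂ :=
  AddSubgroup.map (AddMonoidHom.mulLeft z) gaussianIntegers

/-! The index of `α·ℤ[i]` is `|ℤ[i] / (α)| = |N_{ℤ[i]/ℤ}(α)| = norm α`. For the intersection,
`g = (α/β)·h` means `g β = α h`; coprimality forces `β ∣ h`, hence `g ∈ α·ℤ[i]`
(`β ≠ 0`, since otherwise both norms vanish and `α = β = 0` are not coprime). -/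

namespace Zsqrtd

variable {d : ℤ}

noncomputable def basis (d : ℤ) : Module.Basis (Fin 2) ℤ (ℤ√d) :=
  .ofEquivFun
    { toFun := fun x => ![x.re, x.im]
      invFun := fun f => ⟨f 0, f 1⟩
      left_inv := fun x => by ext <;> simp
      right_inv := fun f => by ext i; fin_cases i <;> simp
      map_add' := fun x y => by ext i; fin_cases i <;> simp
      map_smul' := fun n x => by ext i; fin_cases i <;> simp }

instance : Module.Free ℤ (ℤ√d) := .of_basis (basis d)

instance : Module.Finite ℤ (ℤ√d) := .of_basis (basis d)

theorem algebraNorm_eq_norm (x : ℤ√d) : Algebra.norm ℤ x = x.norm := by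
  rw [Algebra.norm_eq_matrix_det (basis d), Matrix.det_fin_two]
  simp [Algebra.leftMulMatrix_eq_repr_mul, basis, norm, re_mul, im_mul]

end Zsqrtd

theorem IsCoprime.exists_eq_mul_of_mul_eq {R : Type*} [CommRing R] [IsDomain R] {a b g h : R}
    (hab : IsCoprime a b) (hb : b ≠ 0) (hgh : g * b = a * h) :
    ∃ k, g = a * k ∧ h = b * k := by
  obtain ⟨k, rfl⟩ : b ∣ h := hab.symm.dvd_of_dvd_mul_left ⟨g, by rw [← hgh, mul_comm]⟩
  refine ⟨k, mul_right_cancel₀ hb ?_, rfl⟩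
  rw [hgh]
  ring

theorem gaussianIntegers_eq_map_top :
    gaussianIntegers = (⊤ : AddSubgroup GaussianInt).map toComplex.toAddMonoidHom := by
  suffices Subring.closure {Complex.I} = toComplex.range by
    rw [gaussianIntegers, this, ← AddMonoidHom.range_eq_map]
    rfl
  apply le_antisymm
  · rw [Subring.closure_le, Set.singleton_subset_iff]
    exact ⟨⟨0, 1⟩, by simp [toComplex_def']⟩
  · rintro _ ⟨g, rfl⟩
    rw [toComplex_def]
    exact add_mem (intCast_mem _ _) (mul_mem (intCast_mem _ _) (Subring.subset_closure rfl))

theorem mem_gaussianIntegers {x : ℂ} :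
    x ∈ gaussianIntegers ↔ ∃ g : GaussianInt, toComplex g = x := by
  simp [gaussianIntegers_eq_map_top]

theorem mem_zMulGaussianIntegers {z x : ℂ} :
    x ∈ zMulGaussianIntegers z ↔ ∃ g : GaussianInt, z * toComplex g = x := by
  simp [zMulGaussianIntegers, mem_gaussianIntegers]

theorem zMulGaussianIntegers_toComplex (α : GaussianInt) :
    zMulGaussianIntegers (toComplex α) =
      (Ideal.span {α}).toAddSubgroup.map toComplex.toAddMonoidHom := by
  ext x
  simp [mem_zMulGaussianIntegers, Ideal.mem_span_singleton', mul_comm]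

theorem relIndex_zMulGaussianIntegers (α : GaussianInt) :
    (zMulGaussianIntegers (toComplex α)).relIndex gaussianIntegers = (Zsqrtd.norm α).natAbs := by
  rw [zMulGaussianIntegers_toComplex, gaussianIntegers_eq_map_top,
    AddSubgroup.relIndex_map_map_of_injective _ _ toComplex_injective,
    AddSubgroup.relIndex_top_right, ← Zsqrtd.algebraNorm_eq_norm, ← Ideal.absNorm_span_singleton]
  rfl

theorem gaussianIntegers_inf_zMulGaussianIntegers_div {α β : GaussianInt} (hcop : IsCoprime α β)
    (hβ : β ≠ 0) :
    gaussianIntegers ⊓ zMulGaussianIntegers (toComplex α / toComplex β) =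
      zMulGaussianIntegers (toComplex α) := by
  have hβ' : toComplex β ≠ 0 := by rwa [Ne, toComplex_eq_zero]
  ext x
  simp only [AddSubgroup.mem_inf, mem_gaussianIntegers, mem_zMulGaussianIntegers]
  constructor
  · rintro ⟨⟨g, rfl⟩, h, hh⟩
    have hgh : g * β = α * h := by
      apply toComplex_injective
      rw [map_mul, map_mul, ← hh]
      field_simp
    obtain ⟨k, rfl, -⟩ := hcop.exists_eq_mul_of_mul_eq hβ hgh
    exact ⟨k, (map_mul _ _ _).symm⟩
  · rintro ⟨k, rfl⟩
    refine ⟨⟨α * k, map_mul _ _ _⟩, β * k, ?_⟩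
    rw [map_mul]
    field_simp

/-- If `α` and `β` are coprime Gaussian integers with equal norms
`norm α = norm β = m`, and `z = α/β`, then `ℤ[i] ∩ z·ℤ[i] = α·ℤ[i]`, and this
subgroup has index `m` in `ℤ[i]`. -/
theorem gaussian_coincidence_sublattice (α β : GaussianInt) (hcop : IsCoprime α β)
    (m : ℕ) (hα : Zsqrtd.norm α = (m : ℤ)) (hβ : Zsqrtd.norm β = (m : ℤ)) :
    gaussianIntegers ⊓ zMulGaussianIntegers (toComplex α / toComplex β) =
        zMulGaussianIntegers (toComplex α) ∧
      AddSubgroup.relIndex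
        (gaussianIntegers ⊓ zMulGaussianIntegers (toComplex α / toComplex β))
        gaussianIntegers = m := by
  have hβ0 : β ≠ 0 := by
    rintro rfl
    have hα0 : α = 0 := by
      rw [← Zsqrtd.norm_eq_zero_iff (by norm_num : (-1 : ℤ) < 0), hα, ← hβ, Zsqrtd.norm_zero]
    exact not_isCoprime_zero_zero (hα0 ▸ hcop)
  have hinf := gaussianIntegers_inf_zMulGaussianIntegers_div hcop hβ0
  refine ⟨hinf, ?_⟩
  rw [hinf, relIndex_zMulGaussianIntegers, hα, Int.natAbs_natCast]
end

section
/- For every positive integer m, the number of primitive integral solutions of a² + b² = m², i.e. the number of pairs (a,b) ∈ ℤ×ℤ with a² + b² = m² and gcd(a,b) = 1, equals 4·d*(m) if every prime factor of m is congruent to 1 modulo 4, and equals 0 otherwise. -/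
/-!
A primitive solution `(a, b)` of `a² + b² = n` with `n` odd has `b` invertible modulo `n`, and
`a / b` is a square root of `-1` modulo `n`. Conversely every square root `s` of `-1` modulo `n`
arises this way, from `a + bi = gcd(n, s + i)` in the Gaussian integers, and exactly four primitive
solutions give the same `s`, namely the rotations of `(a, b)` by the units of `ℤ[i]`. Hence there
are `4·#{s mod m² : s² = -1}` primitive solutions of `a² + b² = m²` when `m` is odd. That count is
multiplicative in `m` by the Chinese remainder theorem, and modulo `p^(2k)` with `p ≡ 1 mod 4` the
square roots of `-1` are the two elements of order `4` of the cyclic group `(ℤ/p^(2k))ˣ`; so it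
equals `4·2^ω(m) = 4·d*(m)`. If some prime factor of `m` is `2` or `3 mod 4`, there is no solution,
since `-1` would be a square modulo `m²`.
-/

open scoped Classical

/-- The number of squarefree divisors of `m`. -/
def numSquarefreeDivisors (m : ℕ) : ℕ :=
  (m.divisors.filter Squarefree).card

theorem numSquarefreeDivisors_eq_two_pow_card_primeFactors {m : ℕ} (hm : m ≠ 0) :
    numSquarefreeDivisors m = 2 ^ m.primeFactors.card := by
  rw [numSquarefreeDivisors, Finset.card_eq_sum_ones, Nat.sum_divisors_filter_squarefree hm,
    Finset.sum_const, Finset.card_powerset, Nat.factors_eq, List.toFinset_coe,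
    Nat.toFinset_factors, smul_eq_mul, mul_one]

theorem IsCyclic.card_sq_eq_of_orderOf_eq_two {G : Type*} [Group G] [Fintype G] [IsCyclic G]
    {z : G} (hz : orderOf z = 2) (h4 : 4 ∣ Fintype.card G) :
    Nat.card {x : G // x ^ 2 = z} = 2 := by
  have : Fact (Nat.Prime 2) := ⟨Nat.prime_two⟩
  have h2 : 2 ∣ Fintype.card G := (by norm_num : 2 ∣ 4).trans h4
  have eq_of_orderOf_eq_two (y : G) (hy : orderOf y = 2) : y = z := by
    obtain ⟨w, hw⟩ :=
      Finset.card_eq_one.mp ((IsCyclic.card_orderOf_eq_totient h2).trans (by decide))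
    have hy' : y ∈ ({w} : Finset G) := hw ▸ Finset.mem_filter.mpr ⟨Finset.mem_univ _, hy⟩
    have hz' : z ∈ ({w} : Finset G) := hw ▸ Finset.mem_filter.mpr ⟨Finset.mem_univ _, hz⟩
    rw [Finset.mem_singleton] at hy' hz'
    rw [hy', hz']
  have sq_eq_iff (x : G) : x ^ 2 = z ↔ orderOf x = 4 := by
    constructor
    · intro hx
      refine orderOf_eq_prime_pow (p := 2) (n := 1) ?_ ?_
      · rw [pow_one, hx]
        rintro rfl
        simp at hz
      · rw [show 2 ^ (1 + 1) = 2 * 2 from rfl, pow_mul, hx, ← hz, pow_orderOf_eq_one]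
    · intro hx
      exact eq_of_orderOf_eq_two _
        (by rw [orderOf_pow_of_dvd two_ne_zero (by rw [hx]; norm_num), hx])
  rw [Nat.card_congr (Equiv.subtypeEquivRight sq_eq_iff), Nat.card_eq_fintype_card,
    Fintype.card_subtype, IsCyclic.card_orderOf_eq_totient h4]
  decide

theorem card_sq_eq_neg_one_units (R : Type*) [Ring R] :
    Nat.card {u : Rˣ // u ^ 2 = -1} = Nat.card {x : R // x ^ 2 = -1} :=
  Nat.card_congr
    { toFun u := ⟨u.1, by rw [← Units.val_pow_eq_pow_val, u.2, Units.val_neg, Units.val_one]⟩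
      invFun x := ⟨⟨x.1, -x.1, by simp [← sq, x.2], by simp [← sq, x.2]⟩, by ext; simp [x.2]⟩
      left_inv _ := by ext; rfl
      right_inv _ := rfl }

theorem card_sq_eq_neg_one_congr {R S : Type*} [Ring R] [Ring S] (e : R ≃+* S) :
    Nat.card {x : R // x ^ 2 = -1} = Nat.card {y : S // y ^ 2 = -1} :=
  Nat.card_congr <| e.toEquiv.subtypeEquiv fun x => by
    rw [RingEquiv.toEquiv_eq_coe, EquivLike.coe_coe, ← map_pow, ← map_one e, ← map_neg,
      e.injective.eq_iff]

theorem card_sq_eq_neg_one_prod (R S : Type*) [Ring R] [Ring S] :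
    Nat.card {x : R × S // x ^ 2 = -1} =
      Nat.card {x : R // x ^ 2 = -1} * Nat.card {y : S // y ^ 2 = -1} := by
  rw [← Nat.card_prod, Nat.card_congr Equiv.subtypeProdEquivProd.symm]
  exact Nat.card_congr <| Equiv.subtypeEquivRight fun x => Prod.ext_iff

theorem ZMod.card_sq_eq_neg_one_mul {a b : ℕ} (h : a.Coprime b) :
    Nat.card {x : ZMod (a * b) // x ^ 2 = -1} =
      Nat.card {x : ZMod a // x ^ 2 = -1} * Nat.card {y : ZMod b // y ^ 2 = -1} := by
  rw [card_sq_eq_neg_one_congr (ZMod.chineseRemainder h), card_sq_eq_neg_one_prod]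

theorem ZMod.card_sq_eq_neg_one_prime_pow {p k : ℕ} (hp : p.Prime) (hp4 : p % 4 = 1)
    (hk : k ≠ 0) : Nat.card {x : ZMod (p ^ k) // x ^ 2 = -1} = 2 := by
  have : Fact p.Prime := ⟨hp⟩
  have hp2 : p ≠ 2 := by omega
  have := ZMod.isCyclic_units_of_prime_pow p hp hp2 k
  have : Nontrivial (ZMod (p ^ k)) := ZMod.nontrivial_iff.mpr (Nat.one_lt_pow hk hp.one_lt).ne'
  have hchar : ringChar (ZMod (p ^ k)) ≠ 2 := by
    rw [ZMod.ringChar_zmod_n]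
    intro h
    exact hp2 ((Nat.prime_dvd_prime_iff_eq hp Nat.prime_two).mp (h ▸ dvd_pow_self p hk))
  rw [← card_sq_eq_neg_one_units]
  refine IsCyclic.card_sq_eq_of_orderOf_eq_two ?_ ?_
  · rw [← orderOf_units, Units.val_neg, Units.val_one, orderOf_neg_one, if_neg hchar]
  · rw [ZMod.card_units_eq_totient, Nat.totient_prime_pow hp (Nat.pos_of_ne_zero hk)]
    exact Dvd.dvd.mul_left (by omega) _

theorem ZMod.card_sq_eq_neg_one_sq {m : ℕ} (hm : m ≠ 0)
    (h : ∀ p : ℕ, p.Prime → p ∣ m → p % 4 = 1) :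
    Nat.card {x : ZMod (m ^ 2) // x ^ 2 = -1} = 2 ^ m.primeFactors.card := by
  let f (n : ℕ) : ℕ := Nat.card {x : ZMod (n ^ 2) // x ^ 2 = -1}
  have hmul (a b : ℕ) (hab : a.Coprime b) : f (a * b) = f a * f b := by
    simp only [f]
    rw [mul_pow, ZMod.card_sq_eq_neg_one_mul (hab.pow 2 2)]
  have hone : f 1 = 1 := by
    simp only [f]
    rw [one_pow]
    exact Nat.card_eq_one_iff_unique.mpr ⟨inferInstance, ⟨⟨0, Subsingleton.elim _ _⟩⟩⟩
  change f m = _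
  rw [Nat.multiplicative_factorization f hmul hone hm, Finsupp.prod, Nat.support_factorization]
  refine Finset.prod_eq_pow_card fun p hp => ?_
  have hp' := Nat.prime_of_mem_primeFactors hp
  simp only [f]
  rw [← pow_mul]
  exact ZMod.card_sq_eq_neg_one_prime_pow hp' (h p hp' (Nat.dvd_of_mem_primeFactors hp))
    (mul_ne_zero (hp'.factorization_pos_of_dvd hm (Nat.dvd_of_mem_primeFactors hp)).ne' two_ne_zero)

open Zsqrtd in
theorem GaussianInt.exists_norm_eq_dvd_of_dvd_sq_add_one {n : ℕ} (hn : Odd n) {s : ℤ}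
    (hs : (n : ℤ) ∣ s ^ 2 + 1) : ∃ d : GaussianInt, d.norm = n ∧ d ∣ ⟨s, 1⟩ := by
  set N : GaussianInt := ((n : ℤ) : GaussianInt)
  set w : GaussianInt := ⟨s, 1⟩
  set d := EuclideanDomain.gcd N w
  have hdN : d ∣ N := EuclideanDomain.gcd_dvd_left N w
  have hdw : d ∣ w := EuclideanDomain.gcd_dvd_right N w
  have star_dvd {x y : GaussianInt} (h : x ∣ y) : star x ∣ star y := by
    simpa only [starRingEnd_apply] using map_dvd (starRingEnd GaussianInt) h
  have hN_star : star N = N := star_intCast _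
  have hN_dvd : N ∣ d * star d := by
    obtain ⟨c, hc⟩ := hs
    have hw : w * star w = N * c := by
      ext <;> simp [w, N]
      linear_combination hc
    set A := EuclideanDomain.gcdA N w
    set B := EuclideanDomain.gcdB N w
    have hd : d = N * A + w * B := EuclideanDomain.gcd_eq_gcd_ab N w
    rw [hd, star_add, star_mul, star_mul, hN_star]
    exact ⟨A * star A * N + A * star B * star w + w * B * star A + B * star B * c, by
      linear_combination (B * star B) * hw⟩
  -- a common divisor of `d` and `star d` divides both `n` and `w - star w = 2i`
  have hcop : IsCoprime d (star d) := by
    obtain ⟨k, hk⟩ := hn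
    have hN2 : IsCoprime N (w - star w) := ⟨1, ⟨0, k⟩, by ext <;> simp [w, N, hk]; ring⟩
    exact EuclideanDomain.gcd_isUnit_iff.mp <| hN2.isUnit_of_dvd'
      ((EuclideanDomain.gcd_dvd_left _ _).trans hdN)
      (dvd_sub ((EuclideanDomain.gcd_dvd_left _ _).trans hdw)
        ((EuclideanDomain.gcd_dvd_right _ _).trans (star_dvd hdw)))
  have hdvd_N : d * star d ∣ N := hcop.mul_dvd hdN (hN_star ▸ star_dvd hdN)
  rw [← norm_eq_mul_conj] at hN_dvd hdvd_N
  refine ⟨d, Int.dvd_antisymm (GaussianInt.norm_nonneg d) (Int.natCast_nonneg n) ?_ ?_, hdw⟩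
  · exact (intCast_dvd_intCast _ _).mp hdvd_N
  · exact (intCast_dvd_intCast _ _).mp hN_dvd

def primitiveReps (n : ℤ) : Set (ℤ × ℤ) :=
  {x | x.1 ^ 2 + x.2 ^ 2 = n ∧ Int.gcd x.1 x.2 = 1}

theorem primitiveReps_finite (n : ℤ) : (primitiveReps n).Finite := by
  refine (Set.finite_Icc (-n, -n) (n, n)).subset fun x hx => ?_
  have := hx.1
  constructor <;> constructor <;> nlinarith [sq_nonneg x.1, sq_nonneg x.2]

theorem rotate_mem_primitiveReps {n a b : ℤ} (h : (a, b) ∈ primitiveReps n) :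
    (-b, a) ∈ primitiveReps n :=
  ⟨by linear_combination h.1, by simpa [Int.gcd_comm] using h.2⟩

theorem isCoprime_of_mem_primitiveReps {n a b : ℤ} (h : (a, b) ∈ primitiveReps n) :
    IsCoprime n b := by
  have hab : IsCoprime b (a ^ 2) := (Int.isCoprime_iff_gcd_eq_one.mpr h.2).symm.pow_right
  rw [← h.1, isCoprime_comm, sq b]
  exact hab.add_mul_left_right b

theorem exists_mem_primitiveReps_of_dvd_sq_add_one {n : ℕ} (hn : Odd n) {s : ℤ}
    (hs : (n : ℤ) ∣ s ^ 2 + 1) : ∃ a b : ℤ, (a, b) ∈ primitiveReps n ∧ (n : ℤ) ∣ a - s * b := by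
  obtain ⟨d, hd, t, ht⟩ := GaussianInt.exists_norm_eq_dvd_of_dvd_sq_add_one hn hs
  refine ⟨d.re, d.im, ⟨?_, ?_⟩, ?_⟩
  · rw [← hd, Zsqrtd.norm_def]
    ring
  · have hg : ((Int.gcd d.re d.im : ℤ) : GaussianInt) ∣ ⟨s, 1⟩ :=
      ((Zsqrtd.intCast_dvd _ _).mpr ⟨Int.gcd_dvd_left _ _, Int.gcd_dvd_right _ _⟩).trans ⟨t, ht⟩
    exact_mod_cast Int.eq_one_of_dvd_one (Int.natCast_nonneg _) ((Zsqrtd.intCast_dvd _ _).mp hg).2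
  -- `star d * (s + i) = n * t`, whose imaginary part is `d.re - s * d.im`
  · have h := congrArg Zsqrtd.im (congrArg (star d * ·) ht)
    rw [← mul_assoc, mul_comm _ d, ← Zsqrtd.norm_eq_mul_conj, hd] at h
    simp only [Zsqrtd.im_mul, Zsqrtd.re_star, Zsqrtd.im_star, Zsqrtd.im_intCast,
      Zsqrtd.re_intCast] at h
    exact ⟨t.im, by linear_combination h⟩

theorem Int.eq_of_sq_add_sq_eq_one {x y : ℤ} (h : x ^ 2 + y ^ 2 = 1) :
    (x = 1 ∧ y = 0) ∨ (x = 0 ∧ y = 1) ∨ (x = -1 ∧ y = 0) ∨ (x = 0 ∧ y = -1) := by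
  have hx : |x| ≤ 1 := abs_le_one_iff_mul_self_le_one.mpr (by nlinarith [sq_nonneg y])
  have hy : |y| ≤ 1 := abs_le_one_iff_mul_self_le_one.mpr (by nlinarith [sq_nonneg x])
  obtain ⟨hx₀, hx₁⟩ := abs_le.mp hx
  obtain ⟨hy₀, hy₁⟩ := abs_le.mp hy
  interval_cases x <;> interval_cases y <;> simp_all

theorem eq_rotation_of_dvd {n a b c d : ℤ} (hn : n ≠ 0) (hab : a ^ 2 + b ^ 2 = n)
    (hcd : c ^ 2 + d ^ 2 = n) (h₁ : n ∣ a * c + b * d) (h₂ : n ∣ a * d - b * c) :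
    (c = a ∧ d = b) ∨ (c = -b ∧ d = a) ∨ (c = -a ∧ d = -b) ∨ (c = b ∧ d = -a) := by
  obtain ⟨x, hx⟩ := h₁
  obtain ⟨y, hy⟩ := h₂
  have hxy : x ^ 2 + y ^ 2 = 1 := by
    refine mul_left_cancel₀ (pow_ne_zero 2 hn) ?_
    calc n ^ 2 * (x ^ 2 + y ^ 2) = (a * c + b * d) ^ 2 + (a * d - b * c) ^ 2 := by
          rw [hx, hy]; ring
      _ = (a ^ 2 + b ^ 2) * (c ^ 2 + d ^ 2) := by ring
      _ = n ^ 2 * 1 := by rw [hab, hcd]; ring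
  have hc : c = a * x - b * y :=
    mul_left_cancel₀ hn (by linear_combination a * hx - b * hy - c * hab)
  have hd : d = b * x + a * y :=
    mul_left_cancel₀ hn (by linear_combination b * hx + a * hy - d * hab)
  rcases Int.eq_of_sq_add_sq_eq_one hxy with ⟨rfl, rfl⟩ | ⟨rfl, rfl⟩ | ⟨rfl, rfl⟩ | ⟨rfl, rfl⟩ <;>
    simp [hc, hd]

theorem card_rotations {a b : ℤ} (h : (a, b) ≠ 0) :
    ({(a, b), (-b, a), (-a, -b), (b, -a)} : Finset (ℤ × ℤ)).card = 4 := by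
  simp only [ne_eq, Prod.mk_eq_zero, not_and_or] at h
  rw [Finset.card_insert_of_notMem, Finset.card_insert_of_notMem, Finset.card_pair] <;>
    simp [Prod.ext_iff] <;> omega

theorem filter_primitiveReps_eq_rotations {n : ℕ} (hn : n ≠ 0) {t : ZMod n} (ht : t ^ 2 = -1)
    {a b : ℤ} (hab : (a, b) ∈ primitiveReps n) (ha : (a : ZMod n) = t * b) :
    {x ∈ (primitiveReps_finite n).toFinset | (x.1 : ZMod n) = t * x.2} =
      {(a, b), (-b, a), (-a, -b), (b, -a)} := by
  have hrot₁ := rotate_mem_primitiveReps hab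
  have hrot₂ := rotate_mem_primitiveReps hrot₁
  have hrot₃ := rotate_mem_primitiveReps hrot₂
  rw [neg_neg] at hrot₃
  ext ⟨c, d⟩
  simp only [Finset.mem_filter, Set.Finite.mem_toFinset, Finset.mem_insert, Finset.mem_singleton,
    Prod.mk.injEq]
  constructor
  · rintro ⟨hcd, hc⟩
    refine eq_rotation_of_dvd (by exact_mod_cast hn) hab.1 hcd.1 ?_ ?_
    · rw [← ZMod.intCast_zmod_eq_zero_iff_dvd]
      push_cast
      linear_combination (b * d : ZMod n) * ht + (c : ZMod n) * ha + (t * b) * hc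
    · rw [← ZMod.intCast_zmod_eq_zero_iff_dvd]
      push_cast
      linear_combination (d : ZMod n) * ha - (b : ZMod n) * hc
  · rintro (h | h | h | h) <;> rw [h.1, h.2]
    · exact ⟨hab, ha⟩
    · refine ⟨hrot₁, ?_⟩
      push_cast
      linear_combination (-(b : ZMod n)) * ht - t * ha
    · refine ⟨hrot₂, ?_⟩
      push_cast
      linear_combination -ha
    · refine ⟨hrot₃, ?_⟩
      push_cast
      linear_combination (b : ZMod n) * ht + t * ha

theorem card_filter_primitiveReps {n : ℕ} (hn : Odd n) {t : ZMod n} (ht : t ^ 2 = -1) :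
    {x ∈ (primitiveReps_finite n).toFinset | (x.1 : ZMod n) = t * x.2}.card = 4 := by
  obtain ⟨s, rfl⟩ := ZMod.intCast_surjective t
  have hs : (n : ℤ) ∣ s ^ 2 + 1 := by
    rw [← ZMod.intCast_zmod_eq_zero_iff_dvd]
    push_cast
    rw [ht, neg_add_cancel]
  obtain ⟨a, b, hab, has⟩ := exists_mem_primitiveReps_of_dvd_sq_add_one hn hs
  have ha : (a : ZMod n) = s * b := by
    rw [← sub_eq_zero]
    exact_mod_cast (ZMod.intCast_zmod_eq_zero_iff_dvd _ _).mpr has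
  have hab₀ : (a, b) ≠ 0 := by
    intro h
    simp only [Prod.mk_eq_zero] at h
    simp [primitiveReps, h.1, h.2] at hab
  rw [filter_primitiveReps_eq_rotations hn.pos.ne' ht hab ha, card_rotations hab₀]

theorem ncard_primitiveReps {n : ℕ} (hn : Odd n) :
    (primitiveReps n).ncard = 4 * Nat.card {t : ZMod n // t ^ 2 = -1} := by
  have : NeZero n := ⟨hn.pos.ne'⟩
  set S := (primitiveReps_finite n).toFinset
  have hunit : ∀ x ∈ S, IsUnit (x.2 : ZMod n) := fun x hx =>
    (ZMod.coe_int_isUnit_iff_isCoprime _ _).mpr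
      (isCoprime_of_mem_primitiveReps ((Set.Finite.mem_toFinset _).mp hx))
  let F (x : ℤ × ℤ) : ZMod n := x.1 * (x.2 : ZMod n)⁻¹
  have hF : ∀ x ∈ S, ∀ t, F x = t ↔ (x.1 : ZMod n) = t * x.2 := fun x hx t => by
    simp only [F]
    constructor
    · rintro rfl
      rw [mul_assoc, ZMod.inv_mul_of_unit _ (hunit x hx), mul_one]
    · intro h
      rw [h, mul_assoc, ZMod.mul_inv_of_unit _ (hunit x hx), mul_one]
  set T : Finset (ZMod n) := {t | t ^ 2 = -1}
  have hmaps : Set.MapsTo F S T := fun x hx => by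
    have hsum : (x.1 : ZMod n) ^ 2 + (x.2 : ZMod n) ^ 2 = 0 := by
      exact_mod_cast (ZMod.intCast_zmod_eq_zero_iff_dvd _ _).mpr
        (dvd_of_eq ((Set.Finite.mem_toFinset _).mp hx).1.symm)
    rw [(hF x hx (F x)).mp rfl] at hsum
    rw [Finset.mem_coe, Finset.mem_filter_univ]
    rw [← add_eq_zero_iff_eq_neg]
    exact ((hunit x hx).pow 2).mul_left_eq_zero.mp (by linear_combination hsum)
  rw [Set.ncard_eq_toFinset_card _ (primitiveReps_finite n),
    Finset.card_eq_sum_card_fiberwise hmaps,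
    Finset.sum_congr rfl fun t ht => (congrArg Finset.card (Finset.filter_congr (hF · · t))).trans
      (card_filter_primitiveReps hn (Finset.mem_filter.mp ht).2),
    Finset.sum_const, smul_eq_mul, mul_comm, Nat.card_eq_fintype_card, Fintype.card_subtype]

theorem isSquare_neg_one_of_mem_primitiveReps {m : ℕ} {x : ℤ × ℤ}
    (hx : x ∈ primitiveReps ((m : ℤ) ^ 2)) : IsSquare (-1 : ZMod (m ^ 2)) := by
  simpa [Int.natAbs_pow] using ZMod.isSquare_neg_one_of_eq_sq_add_sq_of_isCoprime hx.1.symm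
    (Int.isCoprime_iff_gcd_eq_one.mpr hx.2)

theorem Nat.Prime.mod_four_eq_one_of_isSquare_neg_one {m p : ℕ} (hp : p.Prime) (hpm : p ∣ m)
    (h : IsSquare (-1 : ZMod (m ^ 2))) : p % 4 = 1 := by
  obtain rfl | hp2 := hp.eq_two_or_odd'
  · have h4 : IsSquare (-1 : ZMod 4) := ZMod.isSquare_neg_one_of_dvd (pow_dvd_pow_of_dvd hpm 2) h
    exact absurd h4 (by decide)
  · have : Fact p.Prime := ⟨hp⟩
    have := ZMod.exists_sq_eq_neg_one_iff.mp
      (ZMod.isSquare_neg_one_of_dvd (dvd_pow hpm two_ne_zero) h)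
    have := Nat.odd_iff.mp hp2
    omega

theorem count_primitive_pythagorean_general (m : ℕ) :
    {x : ℤ × ℤ | x.1 ^ 2 + x.2 ^ 2 = (m : ℤ) ^ 2 ∧ Int.gcd x.1 x.2 = 1}.Finite ∧
      {x : ℤ × ℤ | x.1 ^ 2 + x.2 ^ 2 = (m : ℤ) ^ 2 ∧ Int.gcd x.1 x.2 = 1}.ncard =
        if ∀ p : ℕ, p.Prime → p ∣ m → p % 4 = 1 then 4 * numSquarefreeDivisors m
        else 0 := by
  change (primitiveReps ((m : ℤ) ^ 2)).Finite ∧ (primitiveReps ((m : ℤ) ^ 2)).ncard = _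
  refine ⟨primitiveReps_finite _, ?_⟩
  split_ifs with h
  · have hm : Odd m := Nat.not_even_iff_odd.mp fun he => by
      simpa using h 2 Nat.prime_two (even_iff_two_dvd.mp he)
    rw [← Nat.cast_pow, ncard_primitiveReps hm.pow, ZMod.card_sq_eq_neg_one_sq hm.pos.ne' h,
      numSquarefreeDivisors_eq_two_pow_card_primeFactors hm.pos.ne']
  · rw [Set.ncard_eq_zero (primitiveReps_finite _), Set.eq_empty_iff_forall_notMem]
    exact fun x hx => h fun p hp hpm =>
      hp.mod_four_eq_one_of_isSquare_neg_one hpm (isSquare_neg_one_of_mem_primitiveReps hx)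

/-- The number of primitive integral solutions of `a² + b² = m²`, i.e. pairs
`(a, b) ∈ ℤ × ℤ` with `a² + b² = m²` and `gcd(a,b) = 1`, equals `4·d*(m)` if every
prime factor of `m` is congruent to `1` mod `4`, and equals `0` otherwise. -/
theorem count_primitive_pythagorean (m : ℕ) (hm : 0 < m) :
    {x : ℤ × ℤ | x.1 ^ 2 + x.2 ^ 2 = (m : ℤ) ^ 2 ∧ Int.gcd x.1 x.2 = 1}.Finite ∧
      {x : ℤ × ℤ | x.1 ^ 2 + x.2 ^ 2 = (m : ℤ) ^ 2 ∧ Int.gcd x.1 x.2 = 1}.ncard =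
        if ∀ p : ℕ, p.Prime → p ∣ m → p % 4 = 1 then 4 * numSquarefreeDivisors m
        else 0 :=
  count_primitive_pythagorean_general m
end

section
/- The multiplicative group {z ∈ ℚ(i)ˣ : z·z̄ = 1} of unit-modulus Gaussian rationals is isomorphic to the direct product of a cyclic group of order 4 and a free abelian group of countably infinite rank, i.e. to ℤ/4ℤ × ⨁_{k∈ℕ} ℤ. -/
/-!
Every `z` with `z z̄ = 1` in `ℚ(i)` is `w / w̄` for some nonzero Gaussian integer `w`
(Hilbert 90: take `w = 1 + z` with its denominator cleared by a real factor, or `w = i` when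
`z = -1`), and `w ↦ w / w̄` is multiplicative. Units, and Gaussian primes associated to their
conjugates, only contribute powers of `i`; every other Gaussian prime is associated to `πₙ` or
`π̄ₙ`, where `πₙ π̄ₙ = pₙ` is the `n`-th prime `≡ 1 mod 4`. So `i` and the `πₙ / π̄ₙ` generate
the group. They are independent: a relation `i^k ∏ (πₙ / π̄ₙ)^{fₙ} = 1` clears to `A ~ Ā` in
`ℤ[i]`, and comparing the multiplicities of `πₘ` on both sides gives `fₘ = 0`.
-/

/-- The Gaussian rational field `ℚ(i)`, the subfield of `ℂ` generated by `i`. -/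
noncomputable def gaussianRationals : Subfield ℂ :=
  Subfield.closure {Complex.I}

/-- The multiplicative group of unit-modulus Gaussian rationals:
`{z ∈ ℚ(i)ˣ : z·z̄ = 1}`, as a subgroup of `ℂˣ`. -/
noncomputable def unitCircleGaussianRationals : Subgroup ℂˣ where
  carrier := {z : ℂˣ | (z : ℂ) ∈ gaussianRationals ∧ (z : ℂ) * (starRingEnd ℂ) z = 1}
  one_mem' := ⟨one_mem _, by simp⟩
  mul_mem' := by
    rintro a b ⟨ha1, ha2⟩ ⟨hb1, hb2⟩
    refine ⟨by push_cast; exact mul_mem ha1 hb1, ?_⟩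
    push_cast
    rw [map_mul]
    calc (a : ℂ) * b * ((starRingEnd ℂ) a * (starRingEnd ℂ) b)
        = ((a : ℂ) * (starRingEnd ℂ) a) * ((b : ℂ) * (starRingEnd ℂ) b) := by ring
      _ = 1 := by rw [ha2, hb2, one_mul]
  inv_mem' := by
    rintro a ⟨ha1, ha2⟩
    constructor
    · rw [Units.val_inv_eq_inv_val]
      exact inv_mem ha1
    · rw [Units.val_inv_eq_inv_val, map_inv₀, ← mul_inv, ha2, inv_one]

open Complex ComplexConjugate GaussianInt

local notation "ℤ[i]" => GaussianInt

theorem Associated.star {R : Type*} [CommMonoid R] [StarMul R] {a b : R}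
    (h : Associated a b) : Associated (star a) (star b) := by
  simpa using h.map (starMulAut (R := R))

theorem Prime.star {R : Type*} [CommMonoidWithZero R] [StarMul R] {p : R} (hp : Prime p) :
    Prime (star p) :=
  (MulEquiv.prime_iff (starMulAut (R := R))).2 hp

theorem Prime.exists_nat_prime_dvd {R : Type*} [CommSemiring R] {π : R} (hπ : Prime π)
    {n : ℕ} (hn : n ≠ 0) (hdvd : π ∣ (n : R)) : ∃ q : ℕ, q.Prime ∧ π ∣ (q : R) := by
  induction n using induction_on_primes with
  | zero => exact absurd rfl hn
  | one => exact absurd (isUnit_of_dvd_one (by simpa using hdvd)) hπ.not_isUnit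
  | prime_mul q a hq ih =>
    push_cast at hdvd
    rcases hπ.dvd_or_dvd hdvd with h | h
    · exact ⟨q, hq, h⟩
    · exact ih (right_ne_zero_of_mul hn) h

instance Zsqrtd.isLocalHom_normMonoidHom {d : ℤ} : IsLocalHom (Zsqrtd.normMonoidHom (d := d)) :=
  ⟨fun x hx => (Zsqrtd.isUnit_iff_norm_isUnit x).2 hx⟩

namespace GaussianInt

open Zsqrtd

theorem prime_of_natAbs_norm_prime {x : ℤ[i]} (hx : x.norm.natAbs.Prime) : Prime x := by
  refine UniqueFactorizationMonoid.irreducible_iff_prime.1 (.of_map (f := normMonoidHom) ?_)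
  exact (Int.prime_iff_natAbs_prime.2 hx).irreducible

theorem toComplex_sqrtd : ((sqrtd : ℤ[i]) : ℂ) = I := by
  simp [toComplex_def]

theorem isUnit_sqrtd : IsUnit (sqrtd : ℤ[i]) :=
  .of_mul_eq_one (-sqrtd) (by decide)

theorem norm_eq_re_sq_add_im_sq (x : ℤ[i]) : x.norm = x.re ^ 2 + x.im ^ 2 := by
  rw [Zsqrtd.norm_def]; ring

theorem exists_lt_four_eq_sqrtd_pow {u : ℤ[i]} (hu : IsUnit u) : ∃ k < 4, u = sqrtd ^ k := by
  have hnorm : u.re ^ 2 + u.im ^ 2 = 1 := by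
    rw [← norm_eq_re_sq_add_im_sq, norm_eq_one_iff' (by norm_num)]; exact hu
  have hre : -1 ≤ u.re ∧ u.re ≤ 1 := by constructor <;> nlinarith
  have him : -1 ≤ u.im ∧ u.im ≤ 1 := by constructor <;> nlinarith
  obtain ⟨a, b⟩ := u
  obtain ⟨ha₁, ha₂⟩ := hre
  obtain ⟨hb₁, hb₂⟩ := him
  simp only at *
  interval_cases a <;> interval_cases b <;> simp at hnorm
  · exact ⟨2, by norm_num, by decide⟩
  · exact ⟨3, by norm_num, by decide⟩
  · exact ⟨1, by norm_num, by decide⟩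
  · exact ⟨0, by norm_num, by decide⟩

theorem not_associated_star {x : ℤ[i]} (hx : x.norm.natAbs.Prime) (h2 : x.norm.natAbs ≠ 2) :
    ¬ Associated x (star x) := by
  rintro ⟨u, hu⟩
  obtain ⟨k, hk, hk'⟩ := exists_lt_four_eq_sqrtd_pow u.isUnit
  rw [hk'] at hu
  have hcases : x.re = 0 ∨ x.im = 0 ∨ x.re = x.im ∨ x.re = -x.im := by
    interval_cases k <;> simp [Zsqrtd.ext_iff, pow_succ] at hu <;> omega
  have hp : Prime x.norm := Int.prime_iff_natAbs_prime.2 hx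
  rw [norm_eq_re_sq_add_im_sq] at hp hx h2
  rcases hcases with h | h | h | h <;> rw [h] at hp hx h2
  · simp at hp
  · simp at hp
  all_goals
    exact h2 ((Nat.prime_dvd_prime_iff_eq Nat.prime_two hx).1
      (Int.natCast_dvd.1 ⟨x.im ^ 2, by ring⟩)).symm

theorem exists_norm_eq_of_prime_of_mod_four_eq_one {p : ℕ} (hp : p.Prime) (h : p % 4 = 1) :
    ∃ x : ℤ[i], x.norm = p := by
  have := Fact.mk hp
  obtain ⟨a, b, hab⟩ := Nat.Prime.sq_add_sq (p := p) (by omega)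
  exact ⟨⟨a, b⟩, by rw [Zsqrtd.norm_def]; push_cast [← hab]; ring⟩

end GaussianInt

namespace Nat

noncomputable def primeOneModFour (n : ℕ) : ℕ :=
  Nat.nth (fun p => p.Prime ∧ p % 4 = 1) n

theorem infinite_setOf_prime_mod_four_eq_one : {p : ℕ | p.Prime ∧ p % 4 = 1}.Infinite := by
  simpa [Nat.ModEq] using infinite_setOfPred_prime_modEq_one (k := 4) (by norm_num)

theorem primeOneModFour_spec (n : ℕ) : (primeOneModFour n).Prime ∧ primeOneModFour n % 4 = 1 :=
  Nat.nth_mem_of_infinite infinite_setOf_prime_mod_four_eq_one n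

theorem primeOneModFour_injective : Function.Injective primeOneModFour :=
  Nat.nth_injective infinite_setOf_prime_mod_four_eq_one

theorem exists_primeOneModFour_eq {q : ℕ} (hq : q.Prime) (h : q % 4 = 1) :
    ∃ n, primeOneModFour n = q := by
  classical
  exact ⟨_, Nat.nth_count ⟨hq, h⟩⟩

end Nat

namespace GaussianInt

open Nat

noncomputable def splitFactor (n : ℕ) : ℤ[i] :=
  (exists_norm_eq_of_prime_of_mod_four_eq_one (primeOneModFour_spec n).1
    (primeOneModFour_spec n).2).choose

theorem norm_splitFactor (n : ℕ) : (splitFactor n).norm = primeOneModFour n :=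
  (exists_norm_eq_of_prime_of_mod_four_eq_one (primeOneModFour_spec n).1
    (primeOneModFour_spec n).2).choose_spec

theorem natAbs_norm_splitFactor (n : ℕ) : (splitFactor n).norm.natAbs = primeOneModFour n := by
  rw [norm_splitFactor, Int.natAbs_natCast]

theorem prime_splitFactor (n : ℕ) : Prime (splitFactor n) :=
  prime_of_natAbs_norm_prime (by rw [natAbs_norm_splitFactor]; exact (primeOneModFour_spec n).1)

theorem splitFactor_mul_star (n : ℕ) :
    splitFactor n * star (splitFactor n) = primeOneModFour n := by
  rw [← Zsqrtd.norm_eq_mul_conj, norm_splitFactor, Int.cast_natCast]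

theorem not_associated_splitFactor_star (n : ℕ) :
    ¬ Associated (splitFactor n) (star (splitFactor n)) := by
  have := primeOneModFour_spec n
  exact not_associated_star (by rw [natAbs_norm_splitFactor]; exact this.1)
    (by rw [natAbs_norm_splitFactor]; omega)

theorem eq_of_associated_splitFactor {m n : ℕ} {x : ℤ[i]}
    (hx : x = splitFactor n ∨ x = star (splitFactor n)) (h : Associated (splitFactor m) x) :
    m = n := by
  have hnorm := Zsqrtd.norm_eq_of_associated (by norm_num) h
  rcases hx with rfl | rfl <;>
    simpa [Zsqrtd.norm_conj, norm_splitFactor, primeOneModFour_injective.eq_iff] using hnorm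

theorem splitFactor_dvd_splitFactor_iff {m n : ℕ} :
    splitFactor m ∣ splitFactor n ↔ m = n := by
  refine ⟨fun h => ?_, fun h => h ▸ dvd_rfl⟩
  exact eq_of_associated_splitFactor (.inl rfl)
    ((prime_splitFactor m).associated_of_dvd (prime_splitFactor n) h)

theorem not_splitFactor_dvd_star (m n : ℕ) : ¬ splitFactor m ∣ star (splitFactor n) := by
  intro h
  have h' := (prime_splitFactor m).associated_of_dvd (prime_splitFactor n).star h
  obtain rfl := eq_of_associated_splitFactor (.inr rfl) h'
  exact not_associated_splitFactor_star m h'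

theorem exists_associated_splitFactor {π : ℤ[i]} (hπ : Prime π)
    (hπs : ¬ Associated π (star π)) :
    ∃ n, Associated π (splitFactor n) ∨ Associated π (star (splitFactor n)) := by
  -- `2 = (1 + i)(1 - i)` and primes `≡ 3 mod 4` are self-conjugate up to units, so `π` must lie
  -- over a prime `≡ 1 mod 4`.
  have of_dvd {ρ : ℤ[i]} (hρ : Prime ρ) (hρs : Associated ρ (star ρ)) (h : π ∣ ρ) : False :=
    have hπρ := hπ.associated_of_dvd hρ h
    hπs (hπρ.trans (hρs.trans hπρ.star.symm))
  have hN : π.norm.natAbs ≠ 0 := by simpa using hπ.ne_zero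
  have hdvd : π ∣ (π.norm.natAbs : ℤ[i]) := by
    rw [natCast_natAbs_norm, Zsqrtd.norm_eq_mul_conj]; exact dvd_mul_right π _
  obtain ⟨q, hq, hπq⟩ := hπ.exists_nat_prime_dvd hN hdvd
  have := Fact.mk hq
  have hq4 : q = 2 ∨ q % 4 = 1 ∨ q % 4 = 3 := by rcases hq.eq_two_or_odd with h | h <;> omega
  rcases hq4 with rfl | hq1 | hq3
  · let t : ℤ[i] := ⟨1, 1⟩
    have ht : Prime t := prime_of_natAbs_norm_prime (by decide)
    have hts : Associated t (star t) :=
      associated_of_dvd_dvd ⟨⟨0, -1⟩, by decide⟩ ⟨⟨0, 1⟩, by decide⟩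
    have h2 : ((2 : ℕ) : ℤ[i]) = t * star t := by decide
    rw [h2] at hπq
    rcases hπ.dvd_or_dvd hπq with h | h
    · exact (of_dvd ht hts h).elim
    · exact (of_dvd ht hts (h.trans hts.symm.dvd)).elim
  · obtain ⟨n, rfl⟩ := exists_primeOneModFour_eq hq hq1
    rw [← splitFactor_mul_star] at hπq
    refine ⟨n, (hπ.dvd_or_dvd hπq).imp (hπ.associated_of_dvd (prime_splitFactor n)) ?_⟩
    exact hπ.associated_of_dvd (prime_splitFactor n).star
  · have hq' : Prime (q : ℤ[i]) := (prime_iff_mod_four_eq_three_of_nat_prime q).2 hq3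
    exact (of_dvd hq' (by rw [star_natCast]) hπq).elim

end GaussianInt

namespace unitCircleGaussianRationals

local notation "𝕌" => unitCircleGaussianRationals

theorem toComplex_mem_gaussianRationals (w : ℤ[i]) : (w : ℂ) ∈ gaussianRationals := by
  rw [toComplex_def]
  exact add_mem (intCast_mem _ _) (mul_mem (intCast_mem _ _) (Subfield.subset_closure rfl))

theorem exists_eq_div_of_mem_gaussianRationals {z : ℂ} (hz : z ∈ gaussianRationals) :
    ∃ u v : ℤ[i], v ≠ 0 ∧ z = u / v := by
  have hle : Subring.closure {I} ≤ toComplex.range :=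
    Subring.closure_le.2 (by rintro _ rfl; exact ⟨Zsqrtd.sqrtd, toComplex_sqrtd⟩)
  obtain ⟨_, hy, _, hz', rfl⟩ := Subfield.mem_closure_iff.1 hz
  obtain ⟨u, rfl⟩ := hle hy
  obtain ⟨v, rfl⟩ := hle hz'
  by_cases hv : v = 0
  · exact ⟨0, 1, one_ne_zero, by simp [hv]⟩
  · exact ⟨u, v, hv, rfl⟩

noncomputable def conjRatio : ℤ[i] →* ℂ where
  toFun w := w / conj (w : ℂ)
  map_one' := by simp
  map_mul' x y := by simp only [map_mul, div_mul_div_comm]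

theorem conjRatio_apply (w : ℤ[i]) : conjRatio w = w / conj (w : ℂ) := rfl

theorem conjRatio_star (w : ℤ[i]) : conjRatio (star w) = (conjRatio w)⁻¹ := by
  rw [conjRatio_apply, conjRatio_apply, toComplex_star, conj_conj, inv_div]

theorem conjRatio_mul_conj {w : ℤ[i]} (hw : w ≠ 0) : conjRatio w * conj (conjRatio w) = 1 := by
  have : (w : ℂ) ≠ 0 := toComplex_eq_zero.not.2 hw
  have : conj (w : ℂ) ≠ 0 := (map_ne_zero _).2 this
  rw [conjRatio_apply, map_div₀, conj_conj]
  field_simp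

noncomputable def toCircle (w : ℤ[i]) (hw : w ≠ 0) : 𝕌 :=
  ⟨Units.mk0 (conjRatio w) (by simpa [conjRatio_apply] using hw),
    div_mem (toComplex_mem_gaussianRationals w)
      (toComplex_star w ▸ toComplex_mem_gaussianRationals (star w)),
    conjRatio_mul_conj hw⟩

noncomputable def circleVal : 𝕌 →* ℂ :=
  (Units.coeHom ℂ).comp (Subgroup.subtype _)

theorem circleVal_injective : Function.Injective circleVal :=
  fun _ _ h => Subtype.ext (Units.ext h)

theorem circleVal_toCircle (w : ℤ[i]) (hw : w ≠ 0) : circleVal (toCircle w hw) = conjRatio w :=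
  rfl

theorem exists_conjRatio_eq (z : 𝕌) : ∃ w ≠ 0, conjRatio w = circleVal z := by
  obtain ⟨hz, hzz⟩ := z.2
  obtain ⟨u, v, hv, huv⟩ := exists_eq_div_of_mem_gaussianRationals hz
  set ζ := circleVal z
  change ζ * conj ζ = 1 at hzz
  change ζ = u / v at huv
  by_cases h : ζ = -1
  · exact ⟨Zsqrtd.sqrtd, by decide, by simp [conjRatio_apply, toComplex_def, h]⟩
  have hv' : (v : ℂ) ≠ 0 := toComplex_eq_zero.not.2 hv
  have hvv : (v : ℂ) * conj (v : ℂ) ≠ 0 := mul_ne_zero hv' ((map_ne_zero _).2 hv')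
  have hζ : 1 + ζ ≠ 0 := fun h' => h (by linear_combination h')
  have hw : (((u + v) * star v : ℤ[i]) : ℂ) = (1 + ζ) * (v * conj (v : ℂ)) := by
    rw [toComplex_mul, toComplex_add, toComplex_star, huv]
    field_simp
    ring
  refine ⟨(u + v) * star v, fun h0 => ?_, ?_⟩
  · rw [h0, toComplex_zero] at hw
    exact mul_ne_zero hζ hvv hw.symm
  · have hζ' : conj (1 + ζ) ≠ 0 := (map_ne_zero _).2 hζ
    rw [conjRatio_apply, hw, map_mul, map_mul, conj_conj, mul_comm (conj (v : ℂ)),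
      mul_div_mul_right _ _ hvv, div_eq_iff hζ', map_add, map_one]
    linear_combination -hzz

theorem conjRatio_one_add_sqrtd : conjRatio (1 + Zsqrtd.sqrtd) = I := by
  have h' : 1 + -I ≠ 0 := by simp [Complex.ext_iff]
  rw [conjRatio_apply, map_add, map_one, toComplex_sqrtd, map_add, map_one, conj_I, div_eq_iff h']
  linear_combination I_sq

noncomputable def circleI : 𝕌 :=
  toCircle (1 + Zsqrtd.sqrtd) (by decide)

noncomputable def circleSplit (n : ℕ) : 𝕌 :=
  toCircle (splitFactor n) (prime_splitFactor n).ne_zero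

theorem circleI_pow_four : circleI ^ 4 = 1 :=
  circleVal_injective (by
    rw [map_pow, circleI, circleVal_toCircle, conjRatio_one_add_sqrtd, I_pow_four, map_one])

noncomputable def structureHom : Multiplicative (ZMod 4 × (ℕ →₀ ℤ)) →* 𝕌 :=
  AddMonoidHom.toMultiplicativeLeft <|
    (ZMod.lift 4 ⟨zmultiplesHom _ (Additive.ofMul circleI), by
      simp [← ofMul_zpow, circleI_pow_four]⟩).coprod
    (Finsupp.liftAddHom fun n => zmultiplesHom _ (Additive.ofMul (circleSplit n)))

theorem structureHom_ofAdd (k : ZMod 4) (f : ℕ →₀ ℤ) :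
    structureHom (Multiplicative.ofAdd (k, f)) =
      circleI ^ k.val * f.prod fun n e => circleSplit n ^ e := by
  have hk : ((k.val : ℤ) : ZMod 4) = k := by simp
  conv_lhs => rw [← hk]
  simp only [structureHom, AddMonoidHom.toMultiplicativeLeft_apply_apply, toAdd_ofAdd,
    AddMonoidHom.coprod_apply, ZMod.lift_coe, toMul_add, Finsupp.liftAddHom_apply, Finsupp.sum,
    toMul_sum, zmultiplesHom_apply, ← ofMul_zpow, toMul_ofMul, zpow_natCast, Finsupp.prod]

theorem circleVal_structureHom_ofAdd (k : ZMod 4) (f : ℕ →₀ ℤ) :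
    circleVal (structureHom (Multiplicative.ofAdd (k, f))) =
      I ^ k.val * f.prod fun n e => conjRatio (splitFactor n) ^ e := by
  simp only [structureHom_ofAdd, map_mul, map_pow, map_finsuppProd, map_zpow, circleI,
    circleSplit, circleVal_toCircle, conjRatio_one_add_sqrtd]

noncomputable def structureRange : Submonoid ℂ :=
  MonoidHom.mrange (circleVal.comp structureHom)

theorem I_mem_structureRange : I ∈ structureRange :=
  ⟨Multiplicative.ofAdd (1, 0), by
    simp [circleVal_structureHom_ofAdd, show (1 : ZMod 4).val = 1 from rfl]⟩

theorem conjRatio_splitFactor_mem_structureRange (n : ℕ) :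
    conjRatio (splitFactor n) ∈ structureRange :=
  ⟨Multiplicative.ofAdd (0, Finsupp.single n 1), by
    simp [circleVal_structureHom_ofAdd]⟩

theorem inv_mem_structureRange {z : ℂ} (hz : z ∈ structureRange) : z⁻¹ ∈ structureRange := by
  obtain ⟨x, rfl⟩ := hz
  exact ⟨x⁻¹, map_inv _ x⟩

theorem toComplex_mem_structureRange_of_isUnit {u : ℤ[i]} (hu : IsUnit u) :
    (u : ℂ) ∈ structureRange := by
  obtain ⟨k, -, rfl⟩ := exists_lt_four_eq_sqrtd_pow hu
  rw [map_pow, toComplex_sqrtd]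
  exact pow_mem I_mem_structureRange k

theorem conjRatio_mem_structureRange_of_isUnit {u : ℤ[i]} (hu : IsUnit u) :
    conjRatio u ∈ structureRange := by
  rw [conjRatio_apply, ← toComplex_star, div_eq_mul_inv]
  exact mul_mem (toComplex_mem_structureRange_of_isUnit hu)
    (inv_mem_structureRange (toComplex_mem_structureRange_of_isUnit hu.star))

theorem conjRatio_mem_structureRange_of_prime {π : ℤ[i]} (hπ : Prime π) :
    conjRatio π ∈ structureRange := by
  by_cases hπs : Associated π (star π)
  · obtain ⟨u, hu⟩ := hπs.symm
    have hne : conj (π : ℂ) ≠ 0 := by simpa using hπ.ne_zero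
    have : conjRatio π = u := by
      rw [conjRatio_apply, div_eq_iff hne, ← toComplex_star, ← toComplex_mul, mul_comm, hu]
    rw [this]
    exact toComplex_mem_structureRange_of_isUnit u.isUnit
  obtain ⟨n, hn | hn⟩ := exists_associated_splitFactor hπ hπs
  · obtain ⟨u, rfl⟩ := hn.symm
    rw [map_mul]
    exact mul_mem (conjRatio_splitFactor_mem_structureRange n)
      (conjRatio_mem_structureRange_of_isUnit u.isUnit)
  · obtain ⟨u, rfl⟩ := hn.symm
    rw [map_mul, conjRatio_star]
    exact mul_mem (inv_mem_structureRange (conjRatio_splitFactor_mem_structureRange n))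
      (conjRatio_mem_structureRange_of_isUnit u.isUnit)

theorem conjRatio_mem_structureRange {w : ℤ[i]} (hw : w ≠ 0) : conjRatio w ∈ structureRange := by
  induction w using UniqueFactorizationMonoid.induction_on_prime with
  | h₁ => exact absurd rfl hw
  | h₂ u hu => exact conjRatio_mem_structureRange_of_isUnit hu
  | h₃ a p ha hp ih =>
    rw [map_mul]
    exact mul_mem (conjRatio_mem_structureRange_of_prime hp) (ih ha)

theorem structureHom_surjective : Function.Surjective structureHom := by
  intro z
  obtain ⟨w, hw, hwz⟩ := exists_conjRatio_eq z
  obtain ⟨x, hx⟩ := conjRatio_mem_structureRange hw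
  exact ⟨x, circleVal_injective (hx.trans hwz)⟩

noncomputable def splitProd (f : ℕ →₀ ℤ) : ℤ[i] :=
  f.prod fun n e => splitFactor n ^ e.toNat * star (splitFactor n) ^ (-e).toNat

theorem splitProd_ne_zero (f : ℕ →₀ ℤ) : splitProd f ≠ 0 :=
  Finset.prod_ne_zero_iff.2 fun n _ => mul_ne_zero
    (pow_ne_zero _ (prime_splitFactor n).ne_zero) (pow_ne_zero _ (prime_splitFactor n).star.ne_zero)

theorem star_splitProd (f : ℕ →₀ ℤ) : star (splitProd f) = splitProd (-f) := by
  simp [splitProd, Finsupp.prod, star_prod, mul_comm]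

theorem conjRatio_splitProd (f : ℕ →₀ ℤ) :
    conjRatio (splitProd f) = f.prod fun n e => conjRatio (splitFactor n) ^ e := by
  rw [splitProd, map_finsuppProd]
  refine Finset.prod_congr rfl fun n _ => ?_
  have hne : conjRatio (splitFactor n) ≠ 0 := by
    simpa [conjRatio_apply] using (prime_splitFactor n).ne_zero
  dsimp only
  rw [map_mul, map_pow, map_pow, conjRatio_star, inv_pow, ← zpow_natCast, ← zpow_natCast,
    ← zpow_neg, ← zpow_add₀ hne, ← sub_eq_add_neg, Int.toNat_sub_toNat_neg]

theorem emultiplicity_splitFactor_splitProd (m : ℕ) (f : ℕ →₀ ℤ) :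
    emultiplicity (splitFactor m) (splitProd f) = (f m).toNat := by
  have hp := prime_splitFactor m
  have hself : emultiplicity (splitFactor m) (splitFactor m) = 1 := by
    simpa using emultiplicity_pow_self_of_prime hp 1
  have hother {n : ℕ} (h : m ≠ n) : emultiplicity (splitFactor m) (splitFactor n) = 0 :=
    emultiplicity_eq_zero.2 (splitFactor_dvd_splitFactor_iff.not.2 h)
  have hstar (n : ℕ) : emultiplicity (splitFactor m) (star (splitFactor n)) = 0 :=
    emultiplicity_eq_zero.2 (not_splitFactor_dvd_star m n)
  rw [splitProd, Finsupp.prod, Finset.emultiplicity_prod hp]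
  simp only [emultiplicity_mul hp, emultiplicity_pow hp, hstar, mul_zero, add_zero]
  rw [Finset.sum_eq_single m]
  · rw [hself, mul_one]
  · exact fun n _ h => by rw [hother (Ne.symm h), mul_zero]
  · intro h
    rw [Finsupp.notMem_support_iff.1 h]
    simp

theorem associated_splitProd_star {k : ℕ} {f : ℕ →₀ ℤ}
    (h : I ^ k * conjRatio (splitProd f) = 1) :
    Associated (splitProd f) (star (splitProd f)) := by
  refine ⟨isUnit_sqrtd.unit ^ k, toComplex_injective ?_⟩
  have hA : conj (splitProd f : ℂ) ≠ 0 := by simpa using splitProd_ne_zero f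
  rw [conjRatio_apply] at h
  field_simp at h
  rw [toComplex_mul, Units.val_pow_eq_pow_val, IsUnit.unit_spec, map_pow, toComplex_sqrtd,
    toComplex_star]
  linear_combination h

theorem eq_zero_of_associated_splitProd_star {f : ℕ →₀ ℤ}
    (h : Associated (splitProd f) (star (splitProd f))) : f = 0 := by
  ext m
  have := emultiplicity_eq_of_associated_right (a := splitFactor m) h
  rw [star_splitProd, emultiplicity_splitFactor_splitProd,
    emultiplicity_splitFactor_splitProd, Nat.cast_inj, Finsupp.neg_apply] at this
  rw [Finsupp.zero_apply]
  omega

theorem eq_zero_of_I_pow_val_eq_one {k : ZMod 4} (h : I ^ k.val = 1) : k = 0 := by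
  rw [← ZMod.val_eq_zero]
  have hlt := ZMod.val_lt k
  interval_cases k.val
  · rfl
  all_goals norm_num [pow_succ, Complex.ext_iff] at h

theorem structureHom_injective : Function.Injective structureHom := by
  rw [injective_iff_map_eq_one]
  intro x hx
  obtain ⟨⟨k, f⟩, rfl⟩ : ∃ y, Multiplicative.ofAdd y = x := ⟨x.toAdd, rfl⟩
  have h1 : I ^ k.val * conjRatio (splitProd f) = 1 := by
    rw [conjRatio_splitProd, ← circleVal_structureHom_ofAdd, hx, map_one]
  obtain rfl := eq_zero_of_associated_splitProd_star (associated_splitProd_star h1)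
  obtain rfl := eq_zero_of_I_pow_val_eq_one (by simpa [splitProd] using h1)
  rfl

end unitCircleGaussianRationals

/-- The group of unit-modulus Gaussian rationals is isomorphic to the direct product of a
cyclic group of order 4 and a free abelian group of countably infinite rank. -/
theorem unitCircleGaussianRationals_structure :
    Nonempty (unitCircleGaussianRationals ≃* Multiplicative (ZMod 4 × (ℕ →₀ ℤ))) :=
  ⟨(MulEquiv.ofBijective _ ⟨unitCircleGaussianRationals.structureHom_injective,
    unitCircleGaussianRationals.structureHom_surjective⟩).symm⟩
end

section
/- Let n ≥ 3, let ζ = exp(2πi/n) ∈ ℂ, and let M be the additive subgroup of ℂ generated by the powers ζ^k, k = 0,…,n−1 (the principal n-fold symmetric module). For any z ∈ ℂ with |z| = 1, the subgroup M ∩ z·M has finite index in M if and only if z belongs to the cyclotomic field ℚ(ζ), the subfield of ℂ generated by ζ over ℚ. -/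
/-!
`M` is the subring `ℤ[ζ]` of `ℂ`, a finitely generated abelian group, and `ℚ(ζ)` is its field of
fractions. If `M ∩ z·M` has finite index in the infinite group `M`, it contains some `z m ≠ 0`
with `m ∈ M`, so `z ∈ ℚ(ζ)`. Conversely, write `z = x / y` with `x, y ∈ M`; then
`x·M ⊆ M ∩ z·M`. Since `x` is integral over `ℤ`, the ideal `x·M` contains a nonzero integer `c`,
and `c·M` has finite index in the finitely generated group `M`.
-/

open Complex

/-- The principal `n`-fold symmetric module: the additive subgroup of `ℂ` generated by
the `n`-th roots of unity `exp(2πik/n)`, `k = 0, …, n−1`. -/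
noncomputable def principalModule (n : ℕ) : AddSubgroup ℂ :=
  AddSubgroup.closure
    (Set.range fun k : Fin n => Complex.exp (2 * Real.pi * Complex.I / n) ^ (k : ℕ))

theorem Submonoid.coe_powers_eq_range_pow_fin {M : Type*} [Monoid M] {x : M} {n : ℕ}
    (hn : 0 < n) (hx : x ^ n = 1) :
    (Submonoid.powers x : Set M) = Set.range fun k : Fin n => x ^ (k : ℕ) := by
  ext y
  constructor
  · rintro ⟨m, rfl⟩
    exact ⟨⟨m % n, Nat.mod_lt m hn⟩, (pow_eq_pow_mod m hx).symm⟩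
  · rintro ⟨k, rfl⟩
    exact ⟨k, rfl⟩

namespace Subring

variable {K : Type*} [Field K] {R : Subring K}

theorem exists_mul_eq_natCast (hR : R.toAddSubgroup.FG) {a : K} (ha : a ∈ R) (ha0 : a ≠ 0) :
    ∃ b ∈ R, ∃ c : ℕ, c ≠ 0 ∧ a * b = c := by
  have : Module.Finite ℤ R := Module.Finite.iff_addGroup_fg.mpr
    ((AddGroup.fg_iff_addSubgroup_fg _).mpr hR)
  obtain ⟨m, hm, hm0⟩ := (Submodule.ne_bot_iff _).mp <|
    Ideal.comap_ne_bot_of_integral_mem (R := ℤ) (x := (⟨a, ha⟩ : R)) (by simpa using ha0)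
      (Ideal.mem_span_singleton_self _) (Algebra.IsIntegral.isIntegral _)
  obtain ⟨b, hb⟩ := Ideal.mem_span_singleton'.mp (Ideal.mem_comap.mp hm)
  refine ⟨m.sign * b, R.mul_mem (intCast_mem R _) b.2, m.natAbs, by simpa using hm0, ?_⟩
  have hb' : (b : K) * a = m := by simpa using congrArg Subtype.val hb
  rw [mul_left_comm, mul_comm a, hb', ← Int.cast_mul, Int.sign_mul_self, Int.cast_natCast]

theorem isFiniteRelIndex_map_mulLeft (hR : R.toAddSubgroup.FG) {a : K} (ha : a ∈ R)
    (ha0 : a ≠ 0) :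
    (R.toAddSubgroup.map (AddMonoidHom.mulLeft a)).IsFiniteRelIndex R.toAddSubgroup := by
  obtain ⟨b, hb, c, hc, habc⟩ := exists_mul_eq_natCast hR ha ha0
  have := AddSubgroup.isFiniteRelIndex_map_nsmulAddMonoidHom_of_fg hR hc
  refine AddSubgroup.isFiniteRelIndex_of_le_left
    (H := R.toAddSubgroup.map (nsmulAddMonoidHom c)) _ ?_
  rintro _ ⟨x, hx, rfl⟩
  refine ⟨b * x, R.mul_mem hb hx, ?_⟩
  simp [← mul_assoc, habc, nsmul_eq_mul]

variable {s : Set K} {z : K}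

theorem mem_subfieldClosure_of_relIndex_inf_map_mulLeft_ne_zero [CharZero K]
    (h : ((closure s).toAddSubgroup ⊓
      (closure s).toAddSubgroup.map (AddMonoidHom.mulLeft z)).relIndex
        (closure s).toAddSubgroup ≠ 0) :
    z ∈ Subfield.closure s := by
  set R := (closure s).toAddSubgroup
  have hbot : R ⊓ R.map (AddMonoidHom.mulLeft z) ≠ ⊥ := by
    rintro hbot
    rw [hbot, AddSubgroup.relIndex_bot_left] at h
    exact h (Nat.card_eq_zero_of_infinite (α := closure s))
  obtain ⟨⟨x, hxR, m, hmR, rfl⟩, hx0⟩ := AddSubgroup.ne_bot_iff_exists_ne_zero.mp hbot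
  have hm0 : m ≠ 0 := by rintro rfl; simp at hx0
  exact Subfield.mem_closure_iff.mpr ⟨_, hxR, m, hmR, mul_div_cancel_right₀ z hm0⟩

theorem relIndex_inf_map_mulLeft_ne_zero_of_mem_subfieldClosure
    (hR : (closure s).toAddSubgroup.FG) (hz : z ≠ 0) (hzs : z ∈ Subfield.closure s) :
    ((closure s).toAddSubgroup ⊓
      (closure s).toAddSubgroup.map (AddMonoidHom.mulLeft z)).relIndex
        (closure s).toAddSubgroup ≠ 0 := by
  set R := closure s
  obtain ⟨x, hx, y, hy, rfl⟩ := Subfield.mem_closure_iff.mp hzs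
  have hx0 : x ≠ 0 := by rintro rfl; simp at hz
  have hy0 : y ≠ 0 := by rintro rfl; simp at hz
  have := R.isFiniteRelIndex_map_mulLeft hR hx hx0
  refine (AddSubgroup.isFiniteRelIndex_of_le_left
    (H := R.toAddSubgroup.map (AddMonoidHom.mulLeft x)) _ ?_).relIndex_ne_zero
  rintro _ ⟨r, hr, rfl⟩
  refine ⟨R.mul_mem hx hr, y * r, R.mul_mem hy hr, ?_⟩
  simp only [AddMonoidHom.coe_mulLeft]
  field_simp

theorem relIndex_inf_map_mulLeft_ne_zero_iff [CharZero K]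
    (hR : (closure s).toAddSubgroup.FG) (hz : z ≠ 0) :
    ((closure s).toAddSubgroup ⊓
      (closure s).toAddSubgroup.map (AddMonoidHom.mulLeft z)).relIndex
        (closure s).toAddSubgroup ≠ 0 ↔ z ∈ Subfield.closure s :=
  ⟨mem_subfieldClosure_of_relIndex_inf_map_mulLeft_ne_zero,
    relIndex_inf_map_mulLeft_ne_zero_of_mem_subfieldClosure hR hz⟩

end Subring

theorem principalModule_eq_subringClosure {n : ℕ} (hn : 0 < n) :
    principalModule n =
      (Subring.closure {Complex.exp (2 * Real.pi * Complex.I / n)}).toAddSubgroup := by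
  ext x
  rw [Subring.mem_toAddSubgroup, Subring.mem_closure_iff, ← Submonoid.powers_eq_closure,
    Submonoid.coe_powers_eq_range_pow_fin hn ((isPrimitiveRoot_exp n hn.ne').pow_eq_one)]
  rfl

theorem principalModule_fg (n : ℕ) : (principalModule n).FG :=
  ⟨(Set.finite_range _).toFinset, by rw [Set.Finite.coe_toFinset]; rfl⟩

/-- For `n ≥ 3`, `ζ = exp(2πi/n)` and `z ∈ ℂ` of modulus `1`, the subgroup `M ∩ z·M`
of the principal `n`-fold module `M` has finite index in `M` if and only if `z` lies
in the cyclotomic field `ℚ(ζ)`, the subfield of `ℂ` generated by `ζ`. -/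
theorem principalModule_coincidence_iff_mem_cyclotomicField (n : ℕ) (hn : 3 ≤ n)
    (z : ℂ) (hz : ‖z‖ = 1) :
    (AddSubgroup.relIndex
        (principalModule n ⊓
          AddSubgroup.map (AddMonoidHom.mulLeft z) (principalModule n))
        (principalModule n) ≠ 0) ↔
      z ∈ Subfield.closure {Complex.exp (2 * Real.pi * Complex.I / n)} := by
  have hz0 : z ≠ 0 := norm_ne_zero_iff.mp (hz ▸ one_ne_zero)
  have hM := principalModule_fg n
  rw [principalModule_eq_subringClosure (by omega)] at hM ⊢
  exact Subring.relIndex_inf_map_mulLeft_ne_zero_iff hM hz0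
end

section
/- Let n ≥ 3, let K = ℚ(ζ_n) be the n-th cyclotomic field with ring of integers 𝓞_K, and let σ be the ℚ-algebra automorphism of K with σ(ζ) = ζ⁻¹. Suppose γ ∈ K satisfies γ·σ(γ) = 1 and that its coincidence index m, the index of the additive subgroup 𝓞_K ∩ γ·𝓞_K in 𝓞_K, is finite. If gcd(m, n) = 1, then m ≡ 1 (mod n). -/
open NumberField

/-- The ring of integers of a field `K`, viewed as an additive subgroup of `K`. -/
noncomputable def integersSubgroup (K : Type*) [Field K] : AddSubgroup K :=
  AddMonoidHom.range (algebraMap (𝓞 K) K).toAddMonoidHom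

/-!
Let `I = 𝓞_K ∩ γ𝓞_K`, an ideal of index `m`. Since `∏_{0<k<n} (1 - ζ^k) = n` and `n` is prime
to `m`, every `1 - ζ^k` with `0 < k < n` is a unit in `𝓞_K/I`. So the powers of `ζ` act freely
on the nonzero elements of `𝓞_K/I`, in orbits of size `n`, and `n ∣ m - 1`.
-/

open MulAction

theorem Subgroup.card_dvd_card_sub_one_of_isUnit_one_sub {Q : Type*} [CommRing Q] [Finite Q]
    (H : Subgroup Qˣ) (hH : ∀ h ∈ H, h ≠ 1 → IsUnit (1 - (h : Q))) :
    Nat.card H ∣ Nat.card Q - 1 := by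
  let X : SubMulAction H Q :=
    { carrier := {0}ᶜ
      smul_mem' := fun h q hq => by
        simpa only [Set.mem_compl_singleton_iff] using (smul_ne_zero_iff_ne h).mpr hq }
  have hfree : ∀ x : X, stabilizer H x = ⊥ := by
    refine fun x => (Subgroup.eq_bot_iff_forall _).mpr fun h hx => by_contra fun h1 => x.2 ?_
    have hfix : ((h : Qˣ) : Q) * x = x := congrArg Subtype.val hx
    refine ((hH h h.2 fun h' => h1 (Subtype.ext h')).mul_right_eq_zero).mp ?_
    rw [sub_mul, one_mul, hfix, sub_self]
  have hX : Nat.card X = Nat.card Q - 1 := by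
    change Nat.card (({0}ᶜ : Set Q)) = _
    rw [Nat.card_coe_set_eq, Set.ncard_compl, Set.ncard_singleton]
  rw [← hX, Nat.card_congr (selfEquivOrbitsQuotientProd hfree), Nat.card_prod]
  exact dvd_mul_left _ _

theorem Nat.card_modEq_one_of_pow_eq_one {Q : Type*} [CommRing Q] [Finite Q] {z : Q} {n : ℕ}
    (hn : 0 < n) (hz : z ^ n = 1) (hunit : ∀ k, 0 < k → k < n → IsUnit (1 - z ^ k)) :
    Nat.card Q ≡ 1 [MOD n] := by
  cases subsingleton_or_nontrivial Q
  · rw [Nat.card_unique]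
  let u : Qˣ := Units.ofPowEqOne z n hz hn.ne'
  have hord : orderOf u = n := by
    refine (orderOf_eq_iff hn).mpr ⟨Units.ext hz, fun k hkn hk hk1 => (hunit k hk hkn).ne_zero ?_⟩
    have hzk : z ^ k = 1 := by simpa [u] using congrArg Units.val hk1
    rw [hzk, sub_self]
  have hfree : ∀ h ∈ Subgroup.zpowers u, h ≠ 1 → IsUnit (1 - (h : Q)) := by
    classical
    rintro h hh hne
    obtain ⟨k, hk, rfl⟩ := Finset.mem_image.mp (mem_zpowers_iff_mem_range_orderOf.mp hh)
    rw [Finset.mem_range, hord] at hk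
    have hk0 : 0 < k := Nat.pos_of_ne_zero fun h0 => hne (by rw [h0, pow_zero])
    simpa [u] using hunit k hk0 hk
  have hdvd := (Subgroup.zpowers u).card_dvd_card_sub_one_of_isUnit_one_sub hfree
  rw [Nat.card_zpowers, hord] at hdvd
  exact ((Nat.modEq_iff_dvd' Nat.card_pos).mpr hdvd).symm

theorem IsPrimitiveRoot.isUnit_one_sub_map_pow {R S : Type*} [CommRing R] [IsDomain R]
    [CommRing S] {ζ : R} {n : ℕ} (hζ : IsPrimitiveRoot ζ n) (f : R →+* S)
    (hn : IsUnit (n : S)) {k : ℕ} (hk0 : 0 < k) (hkn : k < n) :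
    IsUnit (1 - f ζ ^ k) := by
  obtain ⟨n, rfl⟩ : ∃ n', n = n' + 1 := ⟨n - 1, by omega⟩
  have hprod := congrArg f hζ.prod_one_sub_pow_eq_order
  simp only [map_prod, map_sub, map_one, map_pow, ← Nat.cast_succ, map_natCast] at hprod
  refine isUnit_of_dvd_unit ?_ (hprod ▸ hn)
  obtain ⟨j, rfl⟩ : ∃ j, k = j + 1 := ⟨k - 1, by omega⟩
  exact Finset.dvd_prod_of_mem (fun i => 1 - f ζ ^ (i + 1)) (Finset.mem_range.mpr (by omega))

theorem isUnit_natCast_of_coprime_card {Q : Type*} [CommRing Q] {n : ℕ}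
    (hn : Nat.Coprime (Nat.card Q) n) : IsUnit (n : Q) := by
  have hcard : (Nat.card Q : Q) = 0 := by rw [← nsmul_one]; exact card_nsmul_eq_zero'
  have := (Nat.isCoprime_iff_coprime.mpr hn).map (Int.castRingHom Q)
  rwa [eq_intCast, eq_intCast, Int.cast_natCast, Int.cast_natCast, hcard,
    isCoprime_zero_left] at this

theorem IsPrimitiveRoot.card_quotient_modEq_one {R : Type*} [CommRing R] [IsDomain R] {ζ : R}
    {n : ℕ} (hζ : IsPrimitiveRoot ζ n) (I : Ideal R) (hI : Nat.Coprime (Nat.card (R ⧸ I)) n) :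
    Nat.card (R ⧸ I) ≡ 1 [MOD n] := by
  rcases Nat.eq_zero_or_pos n with rfl | hn
  · rw [(Nat.coprime_zero_right _).mp hI]
  cases finite_or_infinite (R ⧸ I)
  · refine Nat.card_modEq_one_of_pow_eq_one hn (z := Ideal.Quotient.mk I ζ) ?_ fun k hk0 hkn => ?_
    · rw [← map_pow, hζ.pow_eq_one, map_one]
    · exact hζ.isUnit_one_sub_map_pow _ (isUnit_natCast_of_coprime_card hI) hk0 hkn
  · rw [Nat.card_eq_zero_of_infinite, Nat.coprime_zero_left] at hI
    rw [hI]
    exact Nat.modEq_one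

/-- `𝓞_K ∩ γ𝓞_K`, as an ideal of `𝓞_K`. -/
noncomputable def coincidenceIdeal {K : Type*} [Field K] (γ : K) : Ideal (𝓞 K) :=
  (Submodule.span (𝓞 K) {γ}).comap (Algebra.linearMap (𝓞 K) K)

theorem relIndex_integersSubgroup_eq_card_quotient {K : Type*} [Field K] (γ : K) :
    AddSubgroup.relIndex
        (integersSubgroup K ⊓ AddSubgroup.map (AddMonoidHom.mulLeft γ) (integersSubgroup K))
        (integersSubgroup K) =
      Nat.card (𝓞 K ⧸ coincidenceIdeal γ) := by
  rw [integersSubgroup, ← AddSubgroup.index_comap, ← Submodule.cardQuot_apply,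
    Submodule.cardQuot]
  congr 1
  ext x
  simp [coincidenceIdeal, Submodule.mem_span_singleton, Algebra.smul_def, mul_comm γ]

theorem cyclotomic_coincidenceIndex_mod_general (n : ℕ+) (hn : 3 ≤ (n : ℕ))
    (ζ : CyclotomicField n ℚ) (hζ : IsPrimitiveRoot ζ (n : ℕ))
    (γ : CyclotomicField n ℚ) (m : ℕ)
    (hidx : AddSubgroup.relIndex
        (integersSubgroup (CyclotomicField n ℚ) ⊓
          AddSubgroup.map (AddMonoidHom.mulLeft γ)
            (integersSubgroup (CyclotomicField n ℚ)))
        (integersSubgroup (CyclotomicField n ℚ)) = m)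
    (hcop : Nat.gcd m n = 1) :
    m % n = 1 := by
  rw [relIndex_integersSubgroup_eq_card_quotient] at hidx
  subst hidx
  have hmod := hζ.toInteger_isPrimitiveRoot.card_quotient_modEq_one (coincidenceIdeal γ) hcop
  rwa [Nat.ModEq, Nat.one_mod_eq_one.mpr (by omega)] at hmod

/-- Let `K = ℚ(ζₙ)` (`n ≥ 3`) and `σ` the `ℚ`-automorphism with `σ(ζ) = ζ⁻¹`.
If `γ ∈ K` satisfies `γ·σ(γ) = 1` and its coincidence index `m` (the index of
`𝓞_K ∩ γ·𝓞_K` in `𝓞_K`) is finite, then `gcd(m,n) = 1` implies `m ≡ 1 (mod n)`. -/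
theorem cyclotomic_coincidenceIndex_mod (n : ℕ+) (hn : 3 ≤ (n : ℕ))
    (ζ : CyclotomicField n ℚ) (hζ : IsPrimitiveRoot ζ (n : ℕ))
    (σ : CyclotomicField n ℚ ≃ₐ[ℚ] CyclotomicField n ℚ) (hσ : σ ζ = ζ⁻¹)
    (γ : CyclotomicField n ℚ) (hγ : γ * σ γ = 1) (m : ℕ) (hm : m ≠ 0)
    (hidx : AddSubgroup.relIndex
        (integersSubgroup (CyclotomicField n ℚ) ⊓
          AddSubgroup.map (AddMonoidHom.mulLeft γ)
            (integersSubgroup (CyclotomicField n ℚ)))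
        (integersSubgroup (CyclotomicField n ℚ)) = m)
    (hcop : Nat.gcd m n = 1) :
    m % n = 1 :=
  cyclotomic_coincidenceIndex_mod_general n hn ζ hζ γ m hidx hcop
end

section
/- Let n ≥ 3, let K = ℚ(ζ_n) be the n-th cyclotomic field with ring of integers 𝓞_K and automorphism σ determined by σ(ζ) = ζ⁻¹, and assume the class number of K is 1. Then a positive integer m is a coincidence index — i.e. there exists γ ∈ K with γ·σ(γ) = 1 whose coincidence index equals m — if and only if m lies in the multiplicative submonoid of ℕ generated by the basic indices, namely the absolute norms of those nonzero prime ideals P of 𝓞_K with σ(P) ≠ P. -/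
/-!
With class number one, every `γ` with `γ·σ(γ) = 1` is a reduced fraction `a / b` of integers,
and the coincidence index of `a / b` is the norm of `(a)`. The relation `a·σ(a) = b·σ(b)` makes
`a` coprime to `σ(a)`, so every prime dividing `(a)` is moved by `σ` and the index is a product of
basic indices. Conversely, a product of norms of moved primes is the norm of an ideal `B` coprime
to `σ(B)`: adding the factors one at a time, take `P` or `σ(P)`, whichever does not divide
`σ` of the ideal built so far. Then `B = (α)`, and `γ = α / σ(α)` has index `N(B)`.
-/

open NumberField

theorem IsCoprime.apply_of_mul_apply_eq {R : Type*} [CommRing R] {τ : R ≃+* R}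
    (hτ : Function.Involutive τ) {a b : R} (hab : IsCoprime a b) (h : a * τ a = b * τ b) :
    IsCoprime a (τ a) := by
  have ha : a ∣ τ b := hab.dvd_of_dvd_mul_left ⟨τ a, h.symm⟩
  have hb : τ a ∣ b := by simpa [hτ b] using map_dvd τ ha
  exact hab.of_isCoprime_of_dvd_right hb

namespace Ideal

variable {S : Type*} [CommRing S]

theorem absNorm_map_ringEquiv [IsDedekindDomain S] [Module.Free ℤ S] (τ : S ≃+* S)
    (I : Ideal S) : absNorm (I.map τ) = absNorm I := by
  rw [absNorm_apply, absNorm_apply, Submodule.cardQuot_apply, Submodule.cardQuot_apply]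
  exact (Nat.card_congr (quotientEquiv I (I.map τ) τ rfl).toEquiv).symm

variable {τ : S ≃+* S}

theorem map_map_of_involutive (hτ : Function.Involutive τ) (I : Ideal S) :
    (I.map τ).map τ = I := by
  have hsymm : τ.symm = τ := RingEquiv.ext fun x => τ.symm_apply_eq.mpr (hτ x).symm
  nth_rw 1 [← hsymm]
  exact map_of_equiv τ

theorem map_ne_self_of_dvd_of_isCoprime_map {P I : Ideal S} (hP : Prime P)
    (hPI : P ∣ I) (hI : IsCoprime I (I.map τ)) : P.map τ ≠ P := fun hPτ =>
  hP.not_isUnit (hI.isUnit_of_dvd' hPI (hPτ ▸ map_dvd (mapHom τ) hPI))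

theorem isCoprime_map_of_dvd {I J : Ideal S} (hJI : J ∣ I)
    (hI : IsCoprime I (I.map τ)) : IsCoprime J (J.map τ) :=
  (hI.of_isCoprime_of_dvd_left hJI).of_isCoprime_of_dvd_right (map_dvd (mapHom τ) hJI)

section DedekindDomain

variable [IsDedekindDomain S]

theorem IsPrime.isCoprime_of_not_dvd {P X : Ideal S} (hP : P.IsPrime) (hP0 : P ≠ ⊥)
    (h : ¬P ∣ X) : IsCoprime P X :=
  isCoprime_iff_codisjoint.mpr <|
    (hP.isMaximal hP0).out.not_le_iff_codisjoint.mp fun hle => h (dvd_iff_le.mpr hle)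

theorem IsPrime.isCoprime_map_of_map_ne {P : Ideal S} (hP : P.IsPrime) (hP0 : P ≠ ⊥)
    (hPτ : P.map τ ≠ P) : IsCoprime P (P.map τ) :=
  hP.isCoprime_of_not_dvd hP0 fun hdvd => hPτ <|
    ((map_isPrime_of_equiv τ).isMaximal
      ((map_eq_bot_iff_of_injective τ.injective).not.mpr hP0)).eq_of_le
      (hP.isMaximal hP0).ne_top (dvd_iff_le.mp hdvd)

theorem isCoprime_map_mul_of_not_dvd (hτ : Function.Involutive τ) {Q B : Ideal S}
    (hQ : Q.IsPrime) (hQ0 : Q ≠ ⊥) (hQτ : Q.map τ ≠ Q) (hQB : ¬Q ∣ B.map τ)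
    (hB : IsCoprime B (B.map τ)) : IsCoprime (Q * B) ((Q * B).map τ) := by
  have hτQB : ¬Q.map τ ∣ B := fun hdvd =>
    hQB (by simpa [map_map_of_involutive hτ] using map_dvd (mapHom τ) hdvd)
  have hτQ : IsCoprime (Q.map τ) B :=
    (map_isPrime_of_equiv τ).isCoprime_of_not_dvd
      ((map_eq_bot_iff_of_injective τ.injective).not.mpr hQ0) hτQB
  rw [Ideal.map_mul]
  exact ((hQ.isCoprime_map_of_map_ne hQ0 hQτ).mul_right
    (hQ.isCoprime_of_not_dvd hQ0 hQB)).mul_left (hτQ.symm.mul_right hB)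

variable [Module.Free ℤ S]

variable (τ) in
/-- For `τ` the restriction of `σ` to `𝓞_K`, these are the basic indices. -/
def movedPrimeNorms : Set ℕ :=
  {k | ∃ P : Ideal S, P ≠ ⊥ ∧ P.IsPrime ∧ P.map τ ≠ P ∧ absNorm P = k}

theorem absNorm_mem_closure_movedPrimeNorms {I : Ideal S} (hI : IsCoprime I (I.map τ)) :
    absNorm I ∈ Submonoid.closure (movedPrimeNorms τ) := by
  induction I using UniqueFactorizationMonoid.induction_on_prime with
  | h₁ => exact absurd (isUnit_iff.mp (isCoprime_self.mp (map_bot (f := τ) ▸ hI))) bot_ne_top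
  | h₂ I hunit => rw [isUnit_iff.mp hunit, absNorm_top]; exact one_mem _
  | h₃ J P _ hP ih =>
    rw [map_mul absNorm]
    exact mul_mem
      (Submonoid.subset_closure ⟨P, hP.ne_zero, isPrime_of_prime hP,
        map_ne_self_of_dvd_of_isCoprime_map hP (dvd_mul_right P J) hI, rfl⟩)
      (ih (isCoprime_map_of_dvd (dvd_mul_left J P) hI))

theorem exists_prime_not_dvd_map (hτ : Function.Involutive τ) {P B : Ideal S} (hP : P.IsPrime)
    (hP0 : P ≠ ⊥) (hPτ : P.map τ ≠ P) (hB : IsCoprime B (B.map τ)) :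
    ∃ Q : Ideal S, Q.IsPrime ∧ Q ≠ ⊥ ∧ Q.map τ ≠ Q ∧ absNorm Q = absNorm P ∧ ¬Q ∣ B.map τ := by
  by_cases hPB : P ∣ B.map τ
  · refine ⟨P.map τ, map_isPrime_of_equiv τ, (map_eq_bot_iff_of_injective τ.injective).not.mpr hP0,
      by rwa [map_map_of_involutive hτ, ne_comm], absNorm_map_ringEquiv τ P, fun hdvd => ?_⟩
    have hPB' : P ∣ B := by simpa [map_map_of_involutive hτ] using map_dvd (mapHom τ) hdvd
    exact hP.ne_top (isUnit_iff.mp (hB.isUnit_of_dvd' hPB' hPB))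
  · exact ⟨P, hP, hP0, hPτ, rfl, hPB⟩

theorem mem_closure_movedPrimeNorms_iff (hτ : Function.Involutive τ) {m : ℕ} :
    m ∈ Submonoid.closure (movedPrimeNorms τ) ↔
      ∃ B : Ideal S, IsCoprime B (B.map τ) ∧ absNorm B = m := by
  refine ⟨fun hm => ?_, fun ⟨B, hB, hBm⟩ => hBm ▸ absNorm_mem_closure_movedPrimeNorms hB⟩
  induction hm using Submonoid.closure_induction_left with
  | one =>
    refine ⟨⊤, ?_, absNorm_top⟩
    rw [map_top, ← one_eq_top]
    exact isCoprime_one_left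
  | mul_left k hk m _ ih =>
    obtain ⟨P, hP0, hP, hPτ, rfl⟩ := hk
    obtain ⟨B, hB, rfl⟩ := ih
    obtain ⟨Q, hQ, hQ0, hQτ, hQP, hQB⟩ := exists_prime_not_dvd_map hτ hP hP0 hPτ hB
    exact ⟨Q * B, isCoprime_map_mul_of_not_dvd hτ hQ hQ0 hQτ hQB hB, by rw [map_mul, hQP]⟩

end DedekindDomain

end Ideal

section CoincidenceIndex

variable {K : Type*} [Field K]

noncomputable def coincidenceIndex (γ : K) : ℕ :=
  (integersSubgroup K ⊓ (integersSubgroup K).map (AddMonoidHom.mulLeft γ)).relIndex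
    (integersSubgroup K)

theorem integersSubgroup_eq_map_top :
    integersSubgroup K = (⊤ : AddSubgroup (𝓞 K)).map (algebraMap (𝓞 K) K).toAddMonoidHom :=
  AddMonoidHom.range_eq_map _

theorem comap_integersSubgroup_inf_map_mulLeft {γ : K} {a b : 𝓞 K} (hγ : γ * b = a)
    (hab : IsCoprime a b) :
    (integersSubgroup K ⊓ (integersSubgroup K).map (AddMonoidHom.mulLeft γ)).comap
      (algebraMap (𝓞 K) K).toAddMonoidHom = (Ideal.span {a}).toAddSubgroup := by
  ext x
  simp only [AddSubgroup.mem_comap, AddSubgroup.mem_inf, AddSubgroup.mem_map, integersSubgroup,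
    AddMonoidHom.mem_range, Submodule.mem_toAddSubgroup, Ideal.mem_span_singleton]
  constructor
  · rintro ⟨-, -, ⟨c, rfl⟩, hc⟩
    have : a * c = x * b := RingOfIntegers.coe_injective <| by
      change γ * c = x at hc
      push_cast
      linear_combination (-(c : K)) * hγ + (b : K) * hc
    exact hab.dvd_of_dvd_mul_right ⟨c, this.symm⟩
  · rintro ⟨d, rfl⟩
    refine ⟨⟨a * d, rfl⟩, _, ⟨d * b, rfl⟩, ?_⟩
    change γ * ((d * b : 𝓞 K) : K) = ((a * d : 𝓞 K) : K)
    push_cast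
    linear_combination (d : K) * hγ

theorem coincidenceIndex_eq_absNorm [NumberField K] {γ : K} {a b : 𝓞 K} (hγ : γ * b = a)
    (hab : IsCoprime a b) : coincidenceIndex γ = Ideal.absNorm (Ideal.span {a}) := by
  rw [coincidenceIndex, integersSubgroup_eq_map_top, ← AddSubgroup.relIndex_comap,
    AddSubgroup.relIndex_top_right, ← integersSubgroup_eq_map_top,
    comap_integersSubgroup_inf_map_mulLeft hγ hab]
  rfl

end CoincidenceIndex

theorem IsPrimitiveRoot.involutive_of_apply_eq_inv {A L : Type*} [CommRing A] [Field L]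
    [Algebra A L] {n : ℕ} [NeZero n] [hL : IsCyclotomicExtension {n} A L] {ζ : L}
    (hζ : IsPrimitiveRoot ζ n) {σ : L ≃ₐ[A] L} (hσ : σ ζ = ζ⁻¹) : Function.Involutive σ := by
  have hσσ : (σ : L →ₐ[A] L).comp σ = AlgHom.id A L :=
    AlgHom.ext_of_adjoin_eq_top (IsCyclotomicExtension.adjoin_primitive_root_eq_top hζ)
      (by rintro x rfl; simp [hσ])
  exact fun x => AlgHom.congr_fun hσσ x

section Involution

variable {K : Type*} [Field K] [NumberField K] {σ : K ≃ₐ[ℚ] K}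

theorem galRestrict_involutive (hσ : Function.Involutive σ) :
    Function.Involutive (galRestrict ℤ ℚ K (𝓞 K) σ) := fun x =>
  RingOfIntegers.coe_injective <| by
    rw [algebraMap_galRestrict_apply, algebraMap_galRestrict_apply, hσ]

theorem exists_isCoprime_galRestrict_of_mul_apply_eq_one [IsPrincipalIdealRing (𝓞 K)]
    (hσ : Function.Involutive σ) {γ : K} (hγ : γ * σ γ = 1) :
    ∃ a : 𝓞 K, IsCoprime a (galRestrict ℤ ℚ K (𝓞 K) σ a) ∧
      coincidenceIndex γ = Ideal.absNorm (Ideal.span {a}) := by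
  set τ := galRestrict ℤ ℚ K (𝓞 K) σ
  obtain ⟨a, b, hab, rfl⟩ := IsFractionRing.exists_reduced_fraction (𝓞 K) γ
  rw [IsFractionRing.mk'_eq_div] at hγ ⊢
  have hb : algebraMap (𝓞 K) K b ≠ 0 :=
    RingOfIntegers.coe_ne_zero_iff.mpr (nonZeroDivisors.ne_zero b.2)
  have hτb : algebraMap (𝓞 K) K (τ b) ≠ 0 := by
    rw [algebraMap_galRestrict_apply]
    exact (map_ne_zero σ).mpr hb
  have hprod : a * τ a = b * τ b := RingOfIntegers.coe_injective <| by
    rw [map_div₀, ← algebraMap_galRestrict_apply ℤ σ, ← algebraMap_galRestrict_apply ℤ σ,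
      div_mul_div_comm, div_eq_one_iff_eq (mul_ne_zero hb hτb)] at hγ
    simpa using hγ
  exact ⟨a, IsCoprime.apply_of_mul_apply_eq (τ := (τ : 𝓞 K ≃+* 𝓞 K))
    (galRestrict_involutive hσ) hab.isCoprime hprod,
    coincidenceIndex_eq_absNorm (div_mul_cancel₀ _ hb) hab.isCoprime⟩

theorem exists_mul_apply_eq_one_coincidenceIndex_eq (hσ : Function.Involutive σ) {α : 𝓞 K}
    (hα : IsCoprime α (galRestrict ℤ ℚ K (𝓞 K) σ α)) :
    ∃ γ : K, γ * σ γ = 1 ∧ coincidenceIndex γ = Ideal.absNorm (Ideal.span {α}) := by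
  set τ := galRestrict ℤ ℚ K (𝓞 K) σ
  have hα0 : algebraMap (𝓞 K) K α ≠ 0 := by
    rintro hα0
    rw [RingOfIntegers.coe_eq_zero_iff.mp hα0, map_zero, isCoprime_zero_left] at hα
    exact not_isUnit_zero hα
  have hτα : algebraMap (𝓞 K) K (τ α) ≠ 0 := by
    rw [algebraMap_galRestrict_apply]
    exact (map_ne_zero σ).mpr hα0
  refine ⟨algebraMap (𝓞 K) K α / algebraMap (𝓞 K) K (τ α), ?_,
    coincidenceIndex_eq_absNorm (div_mul_cancel₀ _ hτα) hα⟩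
  rw [map_div₀, ← algebraMap_galRestrict_apply ℤ σ, ← algebraMap_galRestrict_apply ℤ σ,
    galRestrict_involutive hσ α, div_mul_div_comm, mul_comm]
  exact div_self (mul_ne_zero hτα hα0)

theorem exists_coincidenceIndex_eq_iff [IsPrincipalIdealRing (𝓞 K)] (hσ : Function.Involutive σ)
    (m : ℕ) : (∃ γ : K, γ * σ γ = 1 ∧ coincidenceIndex γ = m) ↔
      m ∈ Submonoid.closure (Ideal.movedPrimeNorms (galRestrict ℤ ℚ K (𝓞 K) σ : 𝓞 K ≃+* 𝓞 K)) := by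
  rw [Ideal.mem_closure_movedPrimeNorms_iff (galRestrict_involutive hσ)]
  constructor
  · rintro ⟨γ, hγ, rfl⟩
    obtain ⟨a, ha, hidx⟩ := exists_isCoprime_galRestrict_of_mul_apply_eq_one hσ hγ
    refine ⟨Ideal.span {a}, ?_, hidx.symm⟩
    rwa [Ideal.map_span, Set.image_singleton, Ideal.isCoprime_span_singleton_iff]
  · rintro ⟨B, hB, rfl⟩
    obtain ⟨α, rfl⟩ := (IsPrincipalIdealRing.principal B).principal
    rw [Ideal.submodule_span_eq, Ideal.map_span, Set.image_singleton,
      Ideal.isCoprime_span_singleton_iff] at hB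
    exact exists_mul_apply_eq_one_coincidenceIndex_eq hσ hB

end Involution

theorem cyclotomic_coincidenceIndex_iff_basic_general (n : ℕ+)
    (ζ : CyclotomicField n ℚ) (hζ : IsPrimitiveRoot ζ (n : ℕ))
    (σ : CyclotomicField n ℚ ≃ₐ[ℚ] CyclotomicField n ℚ) (hσ : σ ζ = ζ⁻¹)
    (m : ℕ) :
    letI : NumberField (CyclotomicField n ℚ) :=
      @IsCyclotomicExtension.numberField {(n : ℕ)} ℚ (CyclotomicField n ℚ) _ _
        (CyclotomicField.algebra _ _) _ _ _
    NumberField.classNumber (CyclotomicField n ℚ) = 1 →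
      ((∃ γ : CyclotomicField n ℚ, γ * σ γ = 1 ∧
          AddSubgroup.relIndex
            (integersSubgroup (CyclotomicField n ℚ) ⊓
              AddSubgroup.map (AddMonoidHom.mulLeft γ)
                (integersSubgroup (CyclotomicField n ℚ)))
            (integersSubgroup (CyclotomicField n ℚ)) = m) ↔
        m ∈ Submonoid.closure
          {k : ℕ | ∃ P : Ideal (𝓞 (CyclotomicField n ℚ)), P ≠ ⊥ ∧ P.IsPrime ∧
            Ideal.map
              (galRestrict ℤ ℚ (CyclotomicField n ℚ) (𝓞 (CyclotomicField n ℚ)) σ) P ≠ P ∧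
            Ideal.absNorm P = k}) := by
  intro hclass
  have : IsPrincipalIdealRing (𝓞 (CyclotomicField n ℚ)) := classNumber_eq_one_iff.mp hclass
  -- instance search does not find this cyclotomic structure for the `ℚ`-algebra in `σ`'s type
  have hσσ := hζ.involutive_of_apply_eq_inv (hL := CyclotomicField.isCyclotomicExtension _ ℚ) hσ
  exact exists_coincidenceIndex_eq_iff hσσ m

/-- Let `K = ℚ(ζₙ)` (`n ≥ 3`) with `σ` the automorphism `ζ ↦ ζ⁻¹`, and assume `K` has
class number `1`. A positive integer `m` is a coincidence index (of some `γ ∈ K` with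
`γ·σ(γ) = 1`) if and only if `m` lies in the multiplicative submonoid of `ℕ` generated
by the basic indices: the absolute norms of the nonzero prime ideals `P` of `𝓞_K` with
`σ(P) ≠ P`. -/
theorem cyclotomic_coincidenceIndex_iff_basic (n : ℕ+) (hn : 3 ≤ (n : ℕ))
    (ζ : CyclotomicField n ℚ) (hζ : IsPrimitiveRoot ζ (n : ℕ))
    (σ : CyclotomicField n ℚ ≃ₐ[ℚ] CyclotomicField n ℚ) (hσ : σ ζ = ζ⁻¹)
    (m : ℕ) (hm : 0 < m) :
    letI : NumberField (CyclotomicField n ℚ) :=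
      @IsCyclotomicExtension.numberField {(n : ℕ)} ℚ (CyclotomicField n ℚ) _ _
        (CyclotomicField.algebra _ _) _ _ _
    NumberField.classNumber (CyclotomicField n ℚ) = 1 →
      ((∃ γ : CyclotomicField n ℚ, γ * σ γ = 1 ∧
          AddSubgroup.relIndex
            (integersSubgroup (CyclotomicField n ℚ) ⊓
              AddSubgroup.map (AddMonoidHom.mulLeft γ)
                (integersSubgroup (CyclotomicField n ℚ)))
            (integersSubgroup (CyclotomicField n ℚ)) = m) ↔
        m ∈ Submonoid.closure
          {k : ℕ | ∃ P : Ideal (𝓞 (CyclotomicField n ℚ)), P ≠ ⊥ ∧ P.IsPrime ∧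
            Ideal.map
              (galRestrict ℤ ℚ (CyclotomicField n ℚ) (𝓞 (CyclotomicField n ℚ)) σ) P ≠ P ∧
            Ideal.absNorm P = k}) :=
  cyclotomic_coincidenceIndex_iff_basic_general n ζ hζ σ hσ m
end

section
/- Let n ≥ 3, let K = ℚ(ζ_n) be the n-th cyclotomic field with ring of integers 𝓞_K, and let p be a rational prime with p ∤ n. Then for every nonzero prime ideal P of 𝓞_K lying above p, the inertia degree of P over pℤ equals the multiplicative order of p modulo n, i.e. the smallest d ≥ 1 such that n divides p^d − 1. -/
/-!
Since `𝓞_K = ℤ[ζ]` and `p ∤ n`, Dedekind–Kummer identifies the primes of `𝓞_K` above `p` with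
the irreducible factors of `Φₙ` modulo `p`. Each residue field is `𝔽_p(ζ̄)` with `ζ̄` a primitive
`n`-th root of unity, so its degree over `𝔽_p` is the least `f ≥ 1` with `ζ̄ ^ p ^ f = ζ̄`,
that is, the order of `p` in `(ℤ/nℤ)ˣ`.
-/

open NumberField

theorem isLeast_orderOf {G : Type*} [Monoid G] {x : G} (hx : IsOfFinOrder x) :
    IsLeast {d : ℕ | 1 ≤ d ∧ x ^ d = 1} (orderOf x) :=
  ⟨⟨hx.orderOf_pos, pow_orderOf_eq_one x⟩, fun _ ⟨hd, hxd⟩ ↦ orderOf_le_of_pow_eq_one hd hxd⟩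

theorem ZMod.natCast_pow_eq_one_iff_dvd (n p d : ℕ) :
    (p : ZMod n) ^ d = 1 ↔ (n : ℤ) ∣ (p : ℤ) ^ d - 1 := by
  rw [← ZMod.intCast_zmod_eq_zero_iff_dvd]
  push_cast
  exact sub_eq_zero.symm

theorem ZMod.isLeast_orderOf_natCast {n p : ℕ} [NeZero n] (hpn : p.Coprime n) :
    IsLeast {d : ℕ | 1 ≤ d ∧ (n : ℤ) ∣ (p : ℤ) ^ d - 1} (orderOf (p : ZMod n)) := by
  simpa only [ZMod.natCast_pow_eq_one_iff_dvd] using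
    isLeast_orderOf ((ZMod.isUnit_iff_coprime p n).mpr hpn).isOfFinOrder

theorem cyclotomic_inertiaDeg_eq_order_general (n : ℕ+)
    (p : ℕ) (hp : p.Prime) (hpn : ¬ p ∣ (n : ℕ))
    (P : Ideal (𝓞 (CyclotomicField n ℚ))) (hPprime : P.IsPrime)
    (hPp : (p : 𝓞 (CyclotomicField n ℚ)) ∈ P) :
    IsLeast {d : ℕ | 1 ≤ d ∧ ((n : ℕ) : ℤ) ∣ (p : ℤ) ^ d - 1}
      (Ideal.inertiaDeg'
        (Ideal.span {(p : ℤ)}) P) := by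
  have : Fact p.Prime := ⟨hp⟩
  -- Instance search misses this: Mathlib's instance uses `CyclotomicField.algebra`, which agrees
  -- with `DivisionRing.toRatAlgebra` only up to unfolding.
  have : IsCyclotomicExtension {(n : ℕ)} ℚ (CyclotomicField n ℚ) :=
    CyclotomicField.isCyclotomicExtension n ℚ
  have : P.LiesOver (Ideal.span {(p : ℤ)}) :=
    (Ideal.liesOver_span_iff hPprime.ne_top (Nat.prime_iff_prime_int.mp hp)).mpr
      (by simpa using hPp)
  have : P.IsMaximal := .of_liesOver_isMaximal P (Ideal.span {(p : ℤ)})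
  rw [Ideal.inertiaDeg'_eq_inertiaDeg,
    IsCyclotomicExtension.Rat.inertiaDeg_eq_of_not_dvd p _ P hpn]
  exact ZMod.isLeast_orderOf_natCast (hp.coprime_iff_not_dvd.mpr hpn)

/-- Let `K = ℚ(ζₙ)` (`n ≥ 3`) and let `p` be a rational prime not dividing `n`. Then
for every nonzero prime ideal `P` of `𝓞_K` above `p`, the inertia degree of `P` over
`pℤ` is the smallest `d ≥ 1` such that `n ∣ p^d − 1`. -/
theorem cyclotomic_inertiaDeg_eq_order (n : ℕ+) (hn : 3 ≤ (n : ℕ))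
    (p : ℕ) (hp : p.Prime) (hpn : ¬ p ∣ (n : ℕ))
    (P : Ideal (𝓞 (CyclotomicField n ℚ))) (hP0 : P ≠ ⊥) (hPprime : P.IsPrime)
    (hPp : (p : 𝓞 (CyclotomicField n ℚ)) ∈ P) :
    IsLeast {d : ℕ | 1 ≤ d ∧ ((n : ℕ) : ℤ) ∣ (p : ℤ) ^ d - 1}
      (Ideal.inertiaDeg'
        (Ideal.span {(p : ℤ)}) P) :=
  cyclotomic_inertiaDeg_eq_order_general n p hp hpn P hPprime hPp
end
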